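/- arXiv:0909.1655 — 7 statements merged into one kernel-verified Lean document; each statement's English description precedes it below -/
import Mathlib

section
/- The number of noncrossing set partitions of [n] in which every block has size t+1 equals the Fuss-Catalan number C^{(t)}_m = binomial((t+1)m, m)/(tm+1) when n = (t+1)m, and equals 0 when t+1 does not divide n. -/
/-- `P` is a noncrossing set partition of `{0,…,n-1}` all of whose blocks have
size `t+1`. -/
def IsNCPart (t n : ℕ) (P : Finset (Finset ℕ)) : Prop :=
  (∀ B ∈ P, B ⊆ Finset.range n) ∧
  (∀ i < n, ∃! B, B ∈ P ∧ i ∈ B) ∧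
  (∀ B ∈ P, B.card = t + 1) ∧
  ¬ ∃ a b c d : ℕ, a < b ∧ b < c ∧ c < d ∧
      ∃ B ∈ P, ∃ B' ∈ P, B ≠ B' ∧ a ∈ B ∧ c ∈ B ∧ b ∈ B' ∧ d ∈ B'

open Finset

/-- Noncrossing partition of a ground set `A` with all blocks of size `t+1`. -/
def NCA (t : ℕ) (A : Finset ℕ) (P : Finset (Finset ℕ)) : Prop :=
  (∀ B ∈ P, B ⊆ A) ∧
  (∀ i ∈ A, ∃! B, B ∈ P ∧ i ∈ B) ∧
  (∀ B ∈ P, B.card = t + 1) ∧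
  (∀ a b c d : ℕ, a < b → b < c → c < d →
    ∀ B ∈ P, ∀ B' ∈ P, a ∈ B → c ∈ B → b ∈ B' → d ∈ B' → B = B')

/-- the "minimum" map on blocks -/
def bmin (B : Finset ℕ) : ℕ := WithTop.untopD 0 B.min

/-- set of block minima -/
def mins (P : Finset (Finset ℕ)) : Finset ℕ := P.image bmin

/-- `S` is a "good" (ballot) subset of a ground set `A`. -/
def GoodA (t : ℕ) (A : Finset ℕ) (S : Finset ℕ) : Prop :=
  S ⊆ A ∧ A.card = (t + 1) * S.card ∧
  ∀ x : ℕ, (A.filter (· < x)).card ≤ (t + 1) * (S.filter (· < x)).card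

lemma bmin_mem {B : Finset ℕ} (hB : B.Nonempty) : bmin B ∈ B := by
  unfold bmin
  rw [← Finset.coe_min' hB, WithTop.untopD_coe]
  exact Finset.min'_mem _ _

lemma bmin_le {B : Finset ℕ} {y : ℕ} (hy : y ∈ B) : bmin B ≤ y := by
  unfold bmin
  rw [← Finset.coe_min' ⟨y, hy⟩, WithTop.untopD_coe]
  exact Finset.min'_le _ _ hy

section basic
variable {t : ℕ} {A : Finset ℕ} {P : Finset (Finset ℕ)} (hP : NCA t A P)
include hP

lemma NCA.block_nonempty {B : Finset ℕ} (hB : B ∈ P) : B.Nonempty := by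
  rw [← Finset.card_pos, hP.2.2.1 B hB]; omega

lemma NCA.disj {B B' : Finset ℕ} (hB : B ∈ P) (hB' : B' ∈ P) {x : ℕ}
    (hx : x ∈ B) (hx' : x ∈ B') : B = B' := by
  obtain ⟨C, _, hu⟩ := hP.2.1 x (hP.1 B hB hx)
  rw [hu B ⟨hB, hx⟩, hu B' ⟨hB', hx'⟩]

lemma NCA.bmin_injOn {B B' : Finset ℕ} (hB : B ∈ P) (hB' : B' ∈ P)
    (h : bmin B = bmin B') : B = B' :=
  hP.disj hB hB' (bmin_mem (hP.block_nonempty hB)) (h ▸ bmin_mem (hP.block_nonempty hB'))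

lemma NCA.biUnion_eq : P.biUnion id = A := by
  ext x
  simp only [Finset.mem_biUnion, id]
  constructor
  · rintro ⟨B, hB, hx⟩; exact hP.1 B hB hx
  · intro hx; obtain ⟨B, hB, _⟩ := hP.2.1 x hx; exact ⟨B, hB.1, hB.2⟩

lemma NCA.card_eq : A.card = (t + 1) * P.card := by
  rw [← hP.biUnion_eq, Finset.card_biUnion]
  · simp only [id]
    rw [Finset.sum_congr rfl hP.2.2.1, Finset.sum_const, smul_eq_mul, mul_comm]
  · intro B hB B' hB' hne
    show Disjoint B B'
    refine Finset.disjoint_left.2 fun x hx hx' => hne (hP.disj hB hB' hx hx')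

lemma NCA.mins_card : (mins P).card = P.card :=
  Finset.card_image_of_injOn fun B hB B' hB' h => hP.bmin_injOn hB hB' h

lemma NCA.mins_subset : mins P ⊆ A := by
  intro x hx
  obtain ⟨B, hB, rfl⟩ := Finset.mem_image.1 hx
  exact hP.1 B hB (bmin_mem (hP.block_nonempty hB))

end basic

section ballot
variable {t : ℕ} {A : Finset ℕ} {P : Finset (Finset ℕ)} (hP : NCA t A P)
include hP

lemma NCA.ballot (x : ℕ) :
    (A.filter (· < x)).card ≤ (t + 1) * ((mins P).filter (· < x)).card := by
  classical
  have hcover : A.filter (· < x) = (P.filter (fun B => bmin B < x)).biUnion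
      (fun B => B.filter (· < x)) := by
    ext i
    simp only [Finset.mem_filter, Finset.mem_biUnion]
    constructor
    · rintro ⟨hiA, hix⟩
      obtain ⟨B, ⟨hB, hiB⟩, _⟩ := hP.2.1 i hiA
      exact ⟨B, ⟨hB, lt_of_le_of_lt (bmin_le hiB) hix⟩, hiB, hix⟩
    · rintro ⟨B, ⟨hB, _⟩, hiB, hix⟩
      exact ⟨hP.1 B hB hiB, hix⟩
  have hdisj : ∀ B ∈ P.filter (fun B => bmin B < x), ∀ B' ∈ P.filter (fun B => bmin B < x),
      B ≠ B' → Disjoint (B.filter (· < x)) (B'.filter (· < x)) := by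
    intro B hB B' hB' hne
    refine Finset.disjoint_left.2 fun i hi hi' => hne ?_
    exact hP.disj (Finset.mem_filter.1 hB).1 (Finset.mem_filter.1 hB').1
      (Finset.mem_filter.1 hi).1 (Finset.mem_filter.1 hi').1
  rw [hcover, Finset.card_biUnion hdisj]
  have h1 : ∀ B ∈ P.filter (fun B => bmin B < x), (B.filter (· < x)).card ≤ t + 1 := by
    intro B hB
    calc (B.filter (· < x)).card ≤ B.card := Finset.card_filter_le _ _
      _ = t + 1 := hP.2.2.1 B (Finset.mem_filter.1 hB).1
  calc ∑ B ∈ P.filter (fun B => bmin B < x), (B.filter (· < x)).card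
      ≤ ∑ _B ∈ P.filter (fun B => bmin B < x), (t + 1) := Finset.sum_le_sum h1
    _ = (P.filter (fun B => bmin B < x)).card * (t + 1) := by rw [Finset.sum_const, smul_eq_mul]
    _ = (t + 1) * ((mins P).filter (· < x)).card := by
        rw [mul_comm]
        congr 1
        have : (mins P).filter (· < x) = (P.filter (fun B => bmin B < x)).image bmin := by
          unfold mins
          rw [Finset.filter_image]
        rw [this]
        exact (Finset.card_image_of_injOn fun B hB B' hB' h =>
          hP.bmin_injOn (Finset.mem_filter.1 hB).1 (Finset.mem_filter.1 hB').1 h).symm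

lemma NCA.good : GoodA t A (mins P) :=
  ⟨hP.mins_subset, by rw [hP.card_eq, hP.mins_card], hP.ballot⟩

end ballot

section inj
variable {t : ℕ} {A : Finset ℕ} {P : Finset (Finset ℕ)} (hP : NCA t A P)
include hP

lemma NCA.top_block {j : ℕ} (hj : j ∈ mins P) (hmax : ∀ s ∈ mins P, s ≤ j) :
    ∃ B ∈ P, bmin B = j ∧ B = A.filter (fun x => j ≤ x ∧ ∃ y ∈ B, x ≤ y) := by
  classical
  obtain ⟨B, hB, hbm⟩ := Finset.mem_image.1 hj
  refine ⟨B, hB, hbm, ?_⟩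
  ext x
  simp only [Finset.mem_filter]
  constructor
  · intro hx
    exact ⟨hP.1 B hB hx, hbm ▸ bmin_le hx, x, hx, le_rfl⟩
  · rintro ⟨hxA, hjx, y, hyB, hxy⟩
    by_contra hxB
    obtain ⟨B', ⟨hB', hxB'⟩, _⟩ := hP.2.1 x hxA
    have hne : B' ≠ B := fun h => hxB (h ▸ hxB')
    have ho : bmin B' ∈ mins P := Finset.mem_image_of_mem _ hB'
    have holt : bmin B' < j := by
      refine lt_of_le_of_ne (hmax _ ho) fun h => hne (hP.bmin_injOn hB' hB (h.trans hbm.symm))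
    have hjB : j ∈ B := hbm ▸ bmin_mem (hP.block_nonempty hB)
    have hjx' : j < x := lt_of_le_of_ne hjx fun h => hxB (h ▸ hjB)
    have hxy' : x < y := lt_of_le_of_ne hxy fun h => hxB (h ▸ hyB)
    exact hne (hP.2.2.2 (bmin B') j x y holt hjx' hxy' B' hB' B hB
      (bmin_mem (hP.block_nonempty hB')) hxB' hjB hyB)

lemma NCA.erase_block {B : Finset ℕ} (hB : B ∈ P) : NCA t (A \ B) (P.erase B) := by
  classical
  refine ⟨?_, ?_, ?_, ?_⟩
  · intro B' hB'
    have h1 := Finset.mem_erase.1 hB'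
    intro x hx
    refine Finset.mem_sdiff.2 ⟨hP.1 B' h1.2 hx, fun hxB => h1.1 (hP.disj h1.2 hB hx hxB)⟩
  · intro i hi
    obtain ⟨hiA, hiB⟩ := Finset.mem_sdiff.1 hi
    obtain ⟨C, ⟨hC, hiC⟩, hu⟩ := hP.2.1 i hiA
    refine ⟨C, ⟨Finset.mem_erase.2 ⟨fun h => hiB (h ▸ hiC), hC⟩, hiC⟩, ?_⟩
    rintro D ⟨hD, hiD⟩
    exact hu D ⟨(Finset.mem_erase.1 hD).2, hiD⟩
  · exact fun B' hB' => hP.2.2.1 B' (Finset.mem_erase.1 hB').2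
  · intro a b c d h1 h2 h3 B1 hB1 B2 hB2 ha hc hb hd
    exact hP.2.2.2 a b c d h1 h2 h3 B1 (Finset.mem_erase.1 hB1).2 B2
      (Finset.mem_erase.1 hB2).2 ha hc hb hd

lemma NCA.mins_erase {B : Finset ℕ} (hB : B ∈ P) :
    mins (P.erase B) = (mins P).erase (bmin B) := by
  classical
  ext s
  simp only [mins, Finset.mem_image, Finset.mem_erase]
  constructor
  · rintro ⟨C, ⟨hCne, hCP⟩, rfl⟩
    exact ⟨fun h => hCne (hP.bmin_injOn hCP hB h), C, hCP, rfl⟩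
  · rintro ⟨hs, C, hC, rfl⟩
    exact ⟨C, ⟨fun h => hs (by rw [h]), hC⟩, rfl⟩

end inj

lemma NCA_injective (t : ℕ) : ∀ (n : ℕ) (A : Finset ℕ), A.card = n →
    ∀ P Q, NCA t A P → NCA t A Q → mins P = mins Q → P = Q := by
  intro n
  induction n using Nat.strong_induction_on with
  | _ n ih =>
    intro A hA P Q hP hQ hm
    rcases Finset.eq_empty_or_nonempty A with rfl | hAne
    · have hPe : P = ∅ := by
        rw [Finset.eq_empty_iff_forall_notMem]
        intro B hB
        obtain ⟨x, hx⟩ := hP.block_nonempty hB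
        exact absurd (hP.1 B hB hx) (by simp)
      have hQe : Q = ∅ := by
        rw [Finset.eq_empty_iff_forall_notMem]
        intro B hB
        obtain ⟨x, hx⟩ := hQ.block_nonempty hB
        exact absurd (hQ.1 B hB hx) (by simp)
      rw [hPe, hQe]
    · classical
      have hPne : P.Nonempty := by
        obtain ⟨x, hx⟩ := hAne
        obtain ⟨B, ⟨hB, _⟩, _⟩ := hP.2.1 x hx
        exact ⟨B, hB⟩
      have hmne : (mins P).Nonempty := hPne.image _
      set j := (mins P).max' hmne with hjdef
      have hjP : j ∈ mins P := (mins P).max'_mem hmne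
      have hjQ : j ∈ mins Q := hm ▸ hjP
      have hmaxP : ∀ s ∈ mins P, s ≤ j := fun s hs => (mins P).le_max' s hs
      have hmaxQ : ∀ s ∈ mins Q, s ≤ j := fun s hs => hmaxP s (hm ▸ hs)
      obtain ⟨B, hB, hBm, hBeq⟩ := hP.top_block hjP hmaxP
      obtain ⟨C, hC, hCm, hCeq⟩ := hQ.top_block hjQ hmaxQ
      -- B = C
      have hsub : ∀ (B₁ B₂ : Finset ℕ), B₁.Nonempty → B₂.Nonempty →
          B₁ = A.filter (fun x => j ≤ x ∧ ∃ y ∈ B₁, x ≤ y) →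
          B₂ = A.filter (fun x => j ≤ x ∧ ∃ y ∈ B₂, x ≤ y) →
          (∀ y ∈ B₁, ∃ z ∈ B₂, y ≤ z) → B₁ ⊆ B₂ := by
        intro B₁ B₂ h1 h2 he1 he2 hle x hx
        rw [he1] at hx
        obtain ⟨hxA, hjx, y, hy, hxy⟩ := Finset.mem_filter.1 hx
        obtain ⟨z, hz, hyz⟩ := hle y hy
        rw [he2]
        exact Finset.mem_filter.2 ⟨hxA, hjx, z, hz, hxy.trans hyz⟩
      have hBne := hP.block_nonempty hB
      have hCne := hQ.block_nonempty hC
      have hBC : B = C := by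
        rcases le_total (B.max' hBne) (C.max' hCne) with h | h
        · refine Finset.eq_of_subset_of_card_le
            (hsub B C hBne hCne hBeq hCeq fun y hy => ⟨C.max' hCne, C.max'_mem hCne, (B.le_max' y hy).trans h⟩) ?_
          rw [hP.2.2.1 B hB, hQ.2.2.1 C hC]
        · exact (Finset.eq_of_subset_of_card_le
            (hsub C B hCne hBne hCeq hBeq fun y hy => ⟨B.max' hBne, B.max'_mem hBne, (C.le_max' y hy).trans h⟩) (by
              rw [hP.2.2.1 B hB, hQ.2.2.1 C hC])).symm
      subst hBC
      -- induction step
      have hcardB : 0 < B.card := hBne.card_pos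
      have hAB : (A \ B).card < n := by
        have hBA : B ⊆ A := hP.1 B hB
        have := Finset.card_le_card hBA
        rw [Finset.card_sdiff_of_subset hBA]
        omega
      have hPQ' : P.erase B = Q.erase B := by
        refine ih _ hAB (A \ B) rfl _ _ (hP.erase_block hB) (hQ.erase_block hC) ?_
        rw [hP.mins_erase hB, hQ.mins_erase hC, hm]
      have : insert B (P.erase B) = insert B (Q.erase B) := by rw [hPQ']
      rwa [Finset.insert_erase hB, Finset.insert_erase hC] at this

section takeBot

/-- the `k` smallest elements of `B` -/
def takeBot (k : ℕ) (B : Finset ℕ) : Finset ℕ := ((B.sort (· ≤ ·)).take k).toFinset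

lemma takeBot_subset (k : ℕ) (B : Finset ℕ) : takeBot k B ⊆ B := by
  intro x hx
  rw [takeBot, List.mem_toFinset] at hx
  exact (Finset.mem_sort _).1 (List.mem_of_mem_take hx)

lemma takeBot_card {k : ℕ} {B : Finset ℕ} (hk : k ≤ B.card) : (takeBot k B).card = k := by
  rw [takeBot, List.toFinset_card_of_nodup ((B.sort_nodup _).sublist (List.take_sublist _ _)),
    List.length_take, Finset.length_sort]
  omega

lemma takeBot_lt {k : ℕ} {B : Finset ℕ} {x y : ℕ} (hx : x ∈ takeBot k B)
    (hy : y ∈ B) (hy' : y ∉ takeBot k B) : x < y := by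
  have hnd := B.sort_nodup (· ≤ ·)
  have hsort := B.pairwise_sort (· ≤ ·)
  have hpw : (B.sort (· ≤ ·)).Pairwise (fun a b => a ≤ b ∧ a ≠ b) :=
    List.Pairwise.and hsort hnd
  rw [takeBot, List.mem_toFinset] at hx hy'
  have hyl : y ∈ B.sort (· ≤ ·) := (Finset.mem_sort _).2 hy
  rw [← List.take_append_drop k (B.sort (· ≤ ·))] at hpw
  have hyd : y ∈ (B.sort (· ≤ ·)).drop k := by
    have hmem : y ∈ (B.sort (· ≤ ·)).take k ++ (B.sort (· ≤ ·)).drop k := by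
      rw [List.take_append_drop]; exact hyl
    rcases List.mem_append.1 hmem with h | h
    · exact absurd h hy'
    · exact h
  have := (List.pairwise_append.1 hpw).2.2 x hx y hyd
  exact lt_of_le_of_ne this.1 this.2

end takeBot

lemma NCA_exists (t : ℕ) : ∀ (n : ℕ) (A : Finset ℕ), A.card = n →
    ∀ S, GoodA t A S → ∃ P, NCA t A P ∧ mins P = S := by
  intro n
  induction n using Nat.strong_induction_on with
  | _ n ih =>
    intro A hA S hS
    classical
    obtain ⟨hSA, hcard, hballot⟩ := hS
    rcases Finset.eq_empty_or_nonempty A with rfl | hAne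
    · refine ⟨∅, ⟨by simp, by simp, by simp, by simp⟩, ?_⟩
      have : S = ∅ := Finset.subset_empty.1 hSA
      simp [mins, this]
    · have hSne : S.Nonempty := by
        rw [← Finset.card_pos]
        rcases Nat.eq_zero_or_pos S.card with h | h
        · exfalso
          have := hAne.card_pos
          rw [hcard, h, mul_zero] at this
          omega
        · exact h
      set j := S.max' hSne with hjdef
      have hjS : j ∈ S := S.max'_mem hSne
      have hjA : j ∈ A := hSA hjS
      -- S.filter (· < j) = S.erase j
      have hSf : S.filter (· < j) = S.erase j := by
        ext s
        simp only [Finset.mem_filter, Finset.mem_erase]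
        constructor
        · rintro ⟨hs, hlt⟩; exact ⟨Nat.ne_of_lt hlt, hs⟩
        · rintro ⟨hne, hs⟩; exact ⟨hs, lt_of_le_of_ne (S.le_max' s hs) hne⟩
      have hSec : (S.erase j).card = S.card - 1 := Finset.card_erase_of_mem hjS
      -- A has at least t+1 elements ≥ j
      have hsplit : (A.filter (· < j)).card + (A.filter (fun x => j ≤ x)).card = A.card := by
        rw [← Finset.card_union_of_disjoint]
        · congr 1
          rw [← Finset.filter_or]
          rw [Finset.filter_true_of_mem]
          intro x _; omega
        · rw [Finset.disjoint_filter]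
          intro x _ h; omega
      have hblt := hballot j
      rw [hSf, hSec] at hblt
      have hScard : 1 ≤ S.card := hSne.card_pos
      have hge : t + 1 ≤ (A.filter (fun x => j ≤ x)).card := by
        have hk : ∃ k, S.card = k + 1 := ⟨S.card - 1, by omega⟩
        obtain ⟨k, hk⟩ := hk
        have : (t+1) * (S.card - 1) + (t+1) = (t+1) * S.card := by
          rw [hk]; simp [Nat.mul_succ]
        omega
      set I := takeBot (t+1) (A.filter (fun x => j ≤ x)) with hIdef
      have hIsub' : I ⊆ A.filter (fun x => j ≤ x) := takeBot_subset _ _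
      have hIsub : I ⊆ A := fun x hx => (Finset.mem_filter.1 (hIsub' hx)).1
      have hIcard : I.card = t + 1 := takeBot_card hge
      have hIne : I.Nonempty := by rw [← Finset.card_pos, hIcard]; omega
      have hjI : j ∈ I := by
        by_contra hj
        obtain ⟨x, hx⟩ := hIne
        have h1 := takeBot_lt hx (Finset.mem_filter.2 ⟨hjA, le_rfl⟩) hj
        have h2 := (Finset.mem_filter.1 (hIsub' hx)).2
        omega
      have hIge : ∀ x ∈ I, j ≤ x := fun x hx => (Finset.mem_filter.1 (hIsub' hx)).2
      -- key: elements of A \ I that are ≥ j are above all of I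
      have hIabove : ∀ x ∈ A, x ∉ I → j ≤ x → ∀ y ∈ I, y < x := by
        intro x hxA hxI hjx y hy
        exact takeBot_lt hy (Finset.mem_filter.2 ⟨hxA, hjx⟩) hxI
      -- recursive setup
      have hAI : (A \ I).card = A.card - (t+1) := by rw [Finset.card_sdiff_of_subset hIsub, hIcard]
      have hcard' : (A \ I).card = (t+1) * (S.erase j).card := by
        have hk : ∃ k, S.card = k + 1 := ⟨S.card - 1, by omega⟩
        obtain ⟨k, hk⟩ := hk
        rw [hAI, hSec, hcard, hk]
        simp [Nat.mul_succ]
      have hSsub' : S.erase j ⊆ A \ I := by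
        intro s hs
        obtain ⟨hne, hsS⟩ := Finset.mem_erase.1 hs
        have hslt : s < j := lt_of_le_of_ne (S.le_max' s hsS) hne
        refine Finset.mem_sdiff.2 ⟨hSA hsS, fun hsI => ?_⟩
        exact absurd (hIge s hsI) (by omega)
      have hballot' : ∀ x : ℕ, ((A \ I).filter (· < x)).card ≤
          (t + 1) * ((S.erase j).filter (· < x)).card := by
        intro x
        rcases le_or_gt x j with hxj | hjx
        · have e1 : (A \ I).filter (· < x) = A.filter (· < x) := by
            ext y
            simp only [Finset.mem_filter, Finset.mem_sdiff]
            constructor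
            · rintro ⟨⟨h1, _⟩, h2⟩; exact ⟨h1, h2⟩
            · rintro ⟨h1, h2⟩
              refine ⟨⟨h1, fun hyI => ?_⟩, h2⟩
              have := hIge y hyI
              omega
          have e2 : (S.erase j).filter (· < x) = S.filter (· < x) := by
            ext s
            simp only [Finset.mem_filter, Finset.mem_erase]
            constructor
            · rintro ⟨⟨_, h1⟩, h2⟩; exact ⟨h1, h2⟩
            · rintro ⟨h1, h2⟩
              exact ⟨⟨by omega, h1⟩, h2⟩
          rw [e1, e2]
          exact hballot x
        · have e2 : (S.erase j).filter (· < x) = S.erase j := by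
            rw [Finset.filter_true_of_mem]
            intro s hs
            have := S.le_max' s (Finset.mem_erase.1 hs).2
            omega
          rw [e2]
          calc ((A \ I).filter (· < x)).card ≤ (A \ I).card := Finset.card_filter_le _ _
            _ = (t+1) * (S.erase j).card := hcard'
      have hltn : (A \ I).card < n := by
        have := Finset.card_le_card hIsub
        rw [hAI]
        omega
      obtain ⟨P', hP', hm'⟩ := ih _ hltn (A \ I) rfl (S.erase j)
        ⟨hSsub', hcard', hballot'⟩
      -- assemble
      have hInotP' : I ∉ P' := by
        intro h
        obtain ⟨x, hx⟩ := hIne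
        exact (Finset.mem_sdiff.1 (hP'.1 I h hx)).2 hx
      refine ⟨insert I P', ⟨?_, ?_, ?_, ?_⟩, ?_⟩
      · intro B hB
        rcases Finset.mem_insert.1 hB with rfl | hB'
        · exact hIsub
        · exact fun x hx => (Finset.mem_sdiff.1 (hP'.1 B hB' hx)).1
      · intro i hi
        by_cases hiI : i ∈ I
        · refine ⟨I, ⟨Finset.mem_insert_self _ _, hiI⟩, ?_⟩
          rintro D ⟨hD, hiD⟩
          rcases Finset.mem_insert.1 hD with rfl | hD'
          · rfl
          · exact absurd hiI (Finset.mem_sdiff.1 (hP'.1 D hD' hiD)).2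
        · obtain ⟨C, ⟨hC, hiC⟩, hu⟩ := hP'.2.1 i (Finset.mem_sdiff.2 ⟨hi, hiI⟩)
          refine ⟨C, ⟨Finset.mem_insert_of_mem hC, hiC⟩, ?_⟩
          rintro D ⟨hD, hiD⟩
          rcases Finset.mem_insert.1 hD with rfl | hD'
          · exact absurd hiD hiI
          · exact hu D ⟨hD', hiD⟩
      · intro B hB
        rcases Finset.mem_insert.1 hB with rfl | hB'
        · exact hIcard
        · exact hP'.2.2.1 B hB'
      · -- noncrossing
        intro a b c d hab hbc hcd B1 hB1 B2 hB2 ha hc hb hd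
        have key : ∀ (B' : Finset ℕ), B' ∈ P' → ∀ u v : ℕ, u ∈ I → v ∈ I →
            ∀ w : ℕ, w ∈ B' → u < w → w < v → False := by
          intro B' hB' u v hu hv w hw huw hwv
          have hwA : w ∈ A \ I := hP'.1 B' hB' hw
          obtain ⟨hwA', hwI⟩ := Finset.mem_sdiff.1 hwA
          have hjw : j ≤ w := le_trans (hIge u hu) (le_of_lt huw)
          have := hIabove w hwA' hwI hjw v hv
          omega
        rcases Finset.mem_insert.1 hB1 with rfl | h1 <;>
          rcases Finset.mem_insert.1 hB2 with rfl | h2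
        · rfl
        · exact absurd (key B2 h2 a c ha hc b hb hab hbc) not_false
        · exact absurd (key B1 h1 b d hb hd c hc hbc hcd) not_false
        · exact hP'.2.2.2 a b c d hab hbc hcd B1 h1 B2 h2 ha hc hb hd
      · -- mins
        have hbminI : bmin I = j := by
          have h1 : bmin I ∈ I := bmin_mem hIne
          have h2 := hIge _ h1
          have h3 := bmin_le hjI
          omega
        rw [mins, Finset.image_insert, hbminI, ← mins, hm', Finset.insert_erase hjS]

section counting
variable (N : ℕ) (S : Finset ℕ)

/-- number of positions in `[a,b)` whose residue mod `N` lies in `S` -/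
def Ocnt (a b : ℕ) : ℕ := ((Finset.Ico a b).filter (fun x => x % N ∈ S)).card

lemma Ocnt_add {a b c : ℕ} (hab : a ≤ b) (hbc : b ≤ c) :
    Ocnt N S a c = Ocnt N S a b + Ocnt N S b c := by
  unfold Ocnt
  rw [← Finset.Ico_union_Ico_eq_Ico hab hbc, Finset.filter_union,
    Finset.card_union_of_disjoint]
  exact Finset.disjoint_filter_filter (Finset.Ico_disjoint_Ico_consecutive a b c)

lemma Ocnt_single (a : ℕ) : Ocnt N S a (a + 1) = if a % N ∈ S then 1 else 0 := by
  unfold Ocnt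
  rw [Nat.Ico_succ_singleton, Finset.filter_singleton]
  split <;> simp

lemma Ocnt_period (hN : 0 < N) (hS : S ⊆ Finset.range N) (a : ℕ) :
    Ocnt N S a (a + N) = S.card := by
  induction a with
  | zero =>
    unfold Ocnt
    rw [zero_add]
    have h1 : Finset.Ico 0 N = Finset.range N := by
      ext x; simp
    rw [h1]
    have h2 : (Finset.range N).filter (fun x => x % N ∈ S) = S := by
      ext x
      simp only [Finset.mem_filter, Finset.mem_range]
      constructor
      · rintro ⟨hx, hm⟩
        rwa [Nat.mod_eq_of_lt hx] at hm
      · intro hx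
        have hxN : x < N := Finset.mem_range.1 (hS hx)
        exact ⟨hxN, by rwa [Nat.mod_eq_of_lt hxN]⟩
    rw [h2]
  | succ a ihc =>
    have e1 : Ocnt N S a (a + 1 + N) = Ocnt N S a (a + 1) + Ocnt N S (a+1) (a + 1 + N) := by
      exact Ocnt_add N S (by omega) (by omega)
    have e2 : Ocnt N S a (a + 1 + N) = Ocnt N S a (a + N) + Ocnt N S (a+N) (a + 1 + N) := by
      have := Ocnt_add N S (show a ≤ a + N by omega) (show a + N ≤ a + 1 + N by omega)
      rw [this]
    have e3 : Ocnt N S a (a+1) = Ocnt N S (a+N) (a+1+N) := by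
      have h1 := Ocnt_single N S a
      have h2 := Ocnt_single N S (a + N)
      have : (a + N) % N = a % N := Nat.add_mod_right a N
      rw [show a + 1 + N = (a + N) + 1 by omega, h2, this, h1]
    omega
end counting

/-- rotation of a subset of `range N` -/
def rotN (N r : ℕ) (S : Finset ℕ) : Finset ℕ := S.image (fun s => (s + r) % N)

lemma rotN_subset {N : ℕ} (hN : 0 < N) (r : ℕ) (S : Finset ℕ) :
    rotN N r S ⊆ Finset.range N := by
  intro x hx
  obtain ⟨s, _, rfl⟩ := Finset.mem_image.1 hx
  exact Finset.mem_range.2 (Nat.mod_lt _ hN)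

lemma rotN_card {N : ℕ} (r : ℕ) {S : Finset ℕ} (hS : S ⊆ Finset.range N) :
    (rotN N r S).card = S.card := by
  refine Finset.card_image_of_injOn fun a ha b hb h => ?_
  have ha' : a < N := Finset.mem_range.1 (hS ha)
  have hb' : b < N := Finset.mem_range.1 (hS hb)
  have : a % N = b % N := Nat.ModEq.add_right_cancel' r h
  rwa [Nat.mod_eq_of_lt ha', Nat.mod_eq_of_lt hb'] at this

lemma rotN_rotN (N a b : ℕ) (S : Finset ℕ) :
    rotN N b (rotN N a S) = rotN N (a + b) S := by
  unfold rotN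
  rw [Finset.image_image]
  congr 1
  funext s
  simp only [Function.comp_apply]
  rw [Nat.mod_add_mod, add_assoc]

lemma rotN_self {N : ℕ} {S : Finset ℕ} (hS : S ⊆ Finset.range N) :
    rotN N N S = S := by
  unfold rotN
  have h : ∀ s ∈ S, (s + N) % N = s := by
    intro s hs
    rw [Nat.add_mod_right]
    exact Nat.mod_eq_of_lt (Finset.mem_range.1 (hS hs))
  calc S.image (fun s => (s + N) % N) = S.image id := Finset.image_congr h
    _ = S := Finset.image_id

lemma rotN_filter {N : ℕ} {r : ℕ} {S : Finset ℕ} (hS : S ⊆ Finset.range N)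
    (hr : r < N) {k : ℕ} (hk : k ≤ N) :
    ((rotN N r S).filter (· < k)).card = Ocnt N S (N - r) (N - r + k) := by
  have hrot : (rotN N r S).filter (· < k) =
      (Finset.range k).filter (fun i => (i + (N - r)) % N ∈ S) := by
    ext i
    simp only [Finset.mem_filter, Finset.mem_range]
    constructor
    · rintro ⟨hi, hik⟩
      obtain ⟨s, hs, rfl⟩ := Finset.mem_image.1 hi
      refine ⟨hik, ?_⟩
      rw [Nat.mod_add_mod, add_assoc, show r + (N - r) = N by omega, Nat.add_mod_right,
        Nat.mod_eq_of_lt (Finset.mem_range.1 (hS hs))]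
      exact hs
    · rintro ⟨hik, hi⟩
      refine ⟨Finset.mem_image.2 ⟨(i + (N - r)) % N, hi, ?_⟩, hik⟩
      rw [Nat.mod_add_mod, add_assoc, show N - r + r = N by omega, Nat.add_mod_right,
        Nat.mod_eq_of_lt (show i < N by omega)]
  rw [hrot]
  unfold Ocnt
  refine Finset.card_bij (fun i _ => i + (N - r)) ?_ ?_ ?_
  · intro i hi
    obtain ⟨hik, hi'⟩ := Finset.mem_filter.1 hi
    rw [Finset.mem_range] at hik
    exact Finset.mem_filter.2 ⟨Finset.mem_Ico.2 ⟨by omega, by omega⟩, hi'⟩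
  · intro i hi j hj h
    omega
  · intro x hx
    obtain ⟨hx1, hx2⟩ := Finset.mem_filter.1 hx
    rw [Finset.mem_Ico] at hx1
    refine ⟨x - (N - r), Finset.mem_filter.2 ⟨Finset.mem_range.2 (by omega), ?_⟩, by omega⟩
    rw [show x - (N - r) + (N - r) = x by omega]
    exact hx2

section cycle
variable (t n : ℕ) (S : Finset ℕ)

/-- the rotated sequence starting at position `ρ` is a ballot sequence -/
def goodStart (ρ : ℕ) : Prop := ∀ k ≤ n, k ≤ (t + 1) * Ocnt (n + 1) S ρ (ρ + k)

/-- height function of the periodic sequence -/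
noncomputable def gS (k : ℕ) : ℤ := ((t + 1) * Ocnt (n + 1) S 0 k : ℤ) - k

lemma gS_diff {a b : ℕ} (hab : a ≤ b) :
    gS t n S b - gS t n S a = ((t + 1) * Ocnt (n + 1) S a b : ℤ) - (b - a) := by
  unfold gS
  rw [Ocnt_add (n+1) S (Nat.zero_le a) hab]
  push_cast
  ring

lemma gS_period (hS : S ⊆ Finset.range (n + 1)) (hm : (t + 1) * S.card = n) (a : ℕ) :
    gS t n S (a + (n + 1)) = gS t n S a - 1 := by
  have h := gS_diff t n S (show a ≤ a + (n + 1) by omega)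
  rw [Ocnt_period (n+1) S (by omega) hS a] at h
  have : ((t + 1) * S.card : ℤ) = n := by exact_mod_cast hm
  push_cast at h ⊢
  omega

lemma goodStart_iff_gS (ρ : ℕ) :
    goodStart t n S ρ ↔ ∀ k ≤ n, gS t n S ρ ≤ gS t n S (ρ + k) := by
  constructor
  · intro h k hk
    have h1 := gS_diff t n S (show ρ ≤ ρ + k by omega)
    have h2 := h k hk
    have h3 : (k : ℤ) ≤ ((t + 1) * Ocnt (n + 1) S ρ (ρ + k) : ℤ) := by exact_mod_cast h2
    push_cast at h1
    omega
  · intro h k hk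
    have h1 := gS_diff t n S (show ρ ≤ ρ + k by omega)
    have h2 := h k hk
    have h3 : (k : ℤ) ≤ ((t + 1) * Ocnt (n + 1) S ρ (ρ + k) : ℤ) := by
      push_cast at h1
      omega
    exact_mod_cast h3

lemma exists_unique_goodStart (hS : S ⊆ Finset.range (n + 1))
    (hm : (t + 1) * S.card = n) :
    ∃! ρ, ρ ∈ Finset.Icc 1 (n + 1) ∧ goodStart t n S ρ := by
  have hper := gS_period t n S hS hm
  -- first argmin of gS on [1, n+1]
  have hne : (Finset.Icc 1 (n+1)).Nonempty := ⟨1, by simp⟩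
  obtain ⟨ρ0, hρ0, hmin0⟩ := Finset.exists_min_image (Finset.Icc 1 (n+1)) (gS t n S) hne
  classical
  set T := (Finset.Icc 1 (n+1)).filter (fun k => gS t n S k = gS t n S ρ0) with hT
  have hTne : T.Nonempty := ⟨ρ0, Finset.mem_filter.2 ⟨hρ0, rfl⟩⟩
  set ρ := T.min' hTne with hρdef
  have hρT : ρ ∈ T := T.min'_mem hTne
  have hρIcc : ρ ∈ Finset.Icc 1 (n+1) := (Finset.mem_filter.1 hρT).1
  have hρval : gS t n S ρ = gS t n S ρ0 := (Finset.mem_filter.1 hρT).2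
  have hmin : ∀ k ∈ Finset.Icc 1 (n+1), gS t n S ρ ≤ gS t n S k := by
    intro k hk; rw [hρval]; exact hmin0 k hk
  have hstrict : ∀ k ∈ Finset.Icc 1 (n+1), k < ρ → gS t n S ρ + 1 ≤ gS t n S k := by
    intro k hk hkρ
    rcases lt_or_eq_of_le (hmin k hk) with h | h
    · omega
    · exfalso
      have : k ∈ T := Finset.mem_filter.2 ⟨hk, by omega⟩
      have := T.min'_le k this
      omega
  have hIcc := Finset.mem_Icc.1 hρIcc
  refine ⟨ρ, ⟨hρIcc, ?_⟩, ?_⟩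
  · rw [goodStart_iff_gS]
    intro k hk
    rcases le_or_gt (ρ + k) (n + 1) with h | h
    · exact hmin _ (Finset.mem_Icc.2 ⟨by omega, h⟩)
    · have h2 := hper (ρ + k - (n+1))
      rw [show ρ + k - (n+1) + (n+1) = ρ + k from by omega] at h2
      have h3 : ρ + k - (n+1) < ρ := by omega
      have h4 : 1 ≤ ρ + k - (n+1) := by omega
      have h5 := hstrict _ (Finset.mem_Icc.2 ⟨h4, by omega⟩) h3
      omega
  · rintro σ ⟨hσIcc, hσgood⟩
    rw [goodStart_iff_gS] at hσgood
    have hσ := Finset.mem_Icc.1 hσIcc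
    by_contra hne'
    -- wlog via both directions
    have key : ∀ a b : ℕ, a ∈ Finset.Icc 1 (n+1) → b ∈ Finset.Icc 1 (n+1) → a < b →
        (∀ k ≤ n, gS t n S a ≤ gS t n S (a + k)) →
        (∀ k ≤ n, gS t n S b ≤ gS t n S (b + k)) → False := by
      intro a b ha hb hab hga hgb
      have ha' := Finset.mem_Icc.1 ha
      have hb' := Finset.mem_Icc.1 hb
      have h1 : gS t n S a ≤ gS t n S b := by
        have := hga (b - a) (by omega)
        rwa [show a + (b - a) = b by omega] at this
      have h2 : gS t n S b ≤ gS t n S (a + (n + 1)) := by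
        have := hgb (a + (n + 1) - b) (by omega)
        rwa [show b + (a + (n + 1) - b) = a + (n + 1) by omega] at this
      rw [hper a] at h2
      omega
    have hρgood : ∀ k ≤ n, gS t n S ρ ≤ gS t n S (ρ + k) := by
      rw [← goodStart_iff_gS]
      rw [goodStart_iff_gS]
      intro k hk
      rcases le_or_gt (ρ + k) (n + 1) with h | h
      · exact hmin _ (Finset.mem_Icc.2 ⟨by omega, h⟩)
      · have h2 := hper (ρ + k - (n+1))
        rw [show ρ + k - (n+1) + (n+1) = ρ + k from by omega] at h2
        have h3 : ρ + k - (n+1) < ρ := by omega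
        have h4 : 1 ≤ ρ + k - (n+1) := by omega
        have h5 := hstrict _ (Finset.mem_Icc.2 ⟨h4, by omega⟩) h3
        omega
    rcases lt_or_gt_of_ne (Ne.symm hne') with h | h
    · exact key ρ σ hρIcc hσIcc h hρgood hσgood
    · exact key σ ρ hσIcc hρIcc h hσgood hρgood

end cycle

/-- ballot predicate for subsets of `range n` -/
def Goodb (t n : ℕ) (T : Finset ℕ) : Prop :=
  ∀ k ≤ n, k ≤ (t + 1) * (T.filter (· < k)).card

instance (t n : ℕ) (T : Finset ℕ) : Decidable (Goodb t n T) := by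
  unfold Goodb; infer_instance

lemma Goodb_rot_iff {t n : ℕ} {S : Finset ℕ} (hS : S ⊆ Finset.range (n + 1))
    {r : ℕ} (hr : r < n + 1) :
    Goodb t n (rotN (n + 1) r S) ↔ goodStart t n S (n + 1 - r) := by
  unfold Goodb goodStart
  apply forall_congr'
  intro k
  apply imp_congr_right
  intro hk
  rw [rotN_filter hS hr (show k ≤ n + 1 by omega)]

open scoped Classical in
noncomputable def rhoF (t n : ℕ) (S : Finset ℕ) : ℕ :=
  if h : ∃! ρ, ρ ∈ Finset.Icc 1 (n+1) ∧ goodStart t n S ρ then h.exists.choose else 0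

lemma rhoF_spec {t n : ℕ} {S : Finset ℕ}
    (h : ∃! ρ, ρ ∈ Finset.Icc 1 (n+1) ∧ goodStart t n S ρ) :
    (rhoF t n S ∈ Finset.Icc 1 (n+1) ∧ goodStart t n S (rhoF t n S)) ∧
      ∀ σ, σ ∈ Finset.Icc 1 (n+1) → goodStart t n S σ → σ = rhoF t n S := by
  classical
  rw [rhoF]
  rw [dif_pos h]
  have h1 := h.exists.choose_spec
  refine ⟨h1, fun σ h2 h3 => ?_⟩
  obtain ⟨ρ, _, hu⟩ := h
  rw [hu σ ⟨h2, h3⟩, hu _ h1]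

lemma card_good_mul (t m : ℕ) :
    ((((Finset.range ((t+1)*m+1)).powersetCard m).filter
        (fun T => Goodb t ((t+1)*m) T)).card) * ((t+1)*m+1) = ((t+1)*m+1).choose m := by
  classical
  set n := (t+1)*m with hn
  set N := n + 1 with hN
  have hNpos : 0 < N := by omega
  have hmem𝒜 : ∀ S : Finset ℕ, S ∈ (Finset.range N).powersetCard m ↔
      S ⊆ Finset.range N ∧ S.card = m := by
    intro S; rw [Finset.mem_powersetCard]
  have hcards : ((Finset.range N).powersetCard m).card = N.choose m := by
    rw [Finset.card_powersetCard, Finset.card_range]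
  have hgs : ∀ S : Finset ℕ, S ⊆ Finset.range N → S.card = m →
      ∃! ρ, ρ ∈ Finset.Icc 1 N ∧ goodStart t n S ρ := by
    intro S h1 h2
    exact exists_unique_goodStart t n S h1 (by rw [h2])
  have key : (((Finset.range N).powersetCard m).filter (fun T => Goodb t n T) ×ˢ
      Finset.range N).card = ((Finset.range N).powersetCard m).card := by
    refine Finset.card_bij'
      (i := fun (p : Finset ℕ × ℕ) _ => rotN N (N - p.2) p.1)
      (j := fun S _ => (rotN N (N - rhoF t n S) S, N - rhoF t n S)) ?_ ?_ ?_ ?_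
    · -- i maps into 𝒜
      rintro ⟨T, r⟩ hp
      obtain ⟨hT, hr⟩ := Finset.mem_product.1 hp
      obtain ⟨hT𝒜, _⟩ := Finset.mem_filter.1 hT
      obtain ⟨hTsub, hTcard⟩ := (hmem𝒜 T).1 hT𝒜
      exact (hmem𝒜 _).2 ⟨rotN_subset hNpos _ _, by rw [rotN_card _ hTsub, hTcard]⟩
    · -- j maps into product
      intro S hS
      obtain ⟨hSsub, hScard⟩ := (hmem𝒜 S).1 hS
      obtain ⟨⟨hρIcc, hρgood⟩, _⟩ := rhoF_spec (hgs S hSsub hScard)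
      set ρ := rhoF t n S
      have hρ := Finset.mem_Icc.1 hρIcc
      refine Finset.mem_product.2 ⟨Finset.mem_filter.2 ⟨?_, ?_⟩, ?_⟩
      · exact (hmem𝒜 _).2 ⟨rotN_subset hNpos _ _, by rw [rotN_card _ hSsub, hScard]⟩
      · have := (Goodb_rot_iff (t := t) hSsub (show N - ρ < n + 1 by omega)).2
        rw [show n + 1 - (N - ρ) = ρ by omega] at this
        exact this hρgood
      · exact Finset.mem_range.2 (by omega)
    · -- left inverse : j (i p) = p
      rintro ⟨T, r⟩ hp
      obtain ⟨hT, hr⟩ := Finset.mem_product.1 hp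
      obtain ⟨hT𝒜, hTgood⟩ := Finset.mem_filter.1 hT
      obtain ⟨hTsub, hTcard⟩ := (hmem𝒜 T).1 hT𝒜
      rw [Finset.mem_range] at hr
      dsimp only
      set S := rotN N (N - r) T with hSdef
      have hSsub : S ⊆ Finset.range N := rotN_subset hNpos _ _
      have hScard : S.card = m := by rw [hSdef, rotN_card _ hTsub, hTcard]
      have hback : rotN N r S = T := by
        rw [hSdef, rotN_rotN, show N - r + r = N by omega, rotN_self hTsub]
      have hgood : goodStart t n S (N - r) := by
        have := (Goodb_rot_iff (t := t) hSsub (show r < n + 1 by omega)).1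
        rw [hback] at this
        exact this hTgood
      have huniq := (rhoF_spec (hgs S hSsub hScard)).2 (N - r)
        (Finset.mem_Icc.2 ⟨by omega, by omega⟩) hgood
      have hρr : rhoF t n S = N - r := huniq.symm
      rw [hρr, show N - (N - r) = r by omega, hback]
    · -- right inverse : i (j S) = S
      intro S hS
      obtain ⟨hSsub, hScard⟩ := (hmem𝒜 S).1 hS
      obtain ⟨⟨hρIcc, _⟩, _⟩ := rhoF_spec (hgs S hSsub hScard)
      have hρ := Finset.mem_Icc.1 hρIcc
      dsimp only
      rw [rotN_rotN, show N - rhoF t n S + (N - (N - rhoF t n S)) = N by omega,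
        rotN_self hSsub]
  have : (((Finset.range N).powersetCard m).filter (fun T => Goodb t n T)).card * N
      = N.choose m := by
    rw [← hcards, ← key, Finset.card_product, Finset.card_range]
  exact this

/-! ### glue -/

lemma GoodA_range_iff (t n : ℕ) (S : Finset ℕ) :
    GoodA t (Finset.range n) S ↔
      S ⊆ Finset.range n ∧ n = (t+1) * S.card ∧ Goodb t n S := by
  have hfil : ∀ x : ℕ, ((Finset.range n).filter (· < x)).card = min n x := by
    intro x
    have : (Finset.range n).filter (· < x) = Finset.range (min n x) := by
      ext y
      simp only [Finset.mem_filter, Finset.mem_range, lt_min_iff]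
      try tauto
    rw [this, Finset.card_range]
  constructor
  · rintro ⟨h1, h2, h3⟩
    rw [Finset.card_range] at h2
    refine ⟨h1, h2, fun k hk => ?_⟩
    have := h3 k
    rwa [hfil, min_eq_right hk] at this
  · rintro ⟨h1, h2, h3⟩
    refine ⟨h1, by rwa [Finset.card_range], fun x => ?_⟩
    rw [hfil]
    rcases le_or_gt x n with h | h
    · rw [min_eq_right h]
      exact h3 x h
    · rw [min_eq_left (le_of_lt h)]
      have hfull : S.filter (· < x) = S := by
        refine Finset.filter_true_of_mem fun s hs => ?_
        have := Finset.mem_range.1 (h1 hs)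
        omega
      rw [hfull]
      omega

lemma mem_goodFinset_iff (t m : ℕ) (T : Finset ℕ) :
    (T ∈ ((Finset.range ((t+1)*m+1)).powersetCard m).filter
        (fun T => Goodb t ((t+1)*m) T)) ↔ GoodA t (Finset.range ((t+1)*m)) T := by
  classical
  set n := (t+1)*m with hn
  rw [Finset.mem_filter, Finset.mem_powersetCard, GoodA_range_iff]
  constructor
  · rintro ⟨⟨hsub, hcard⟩, hgood⟩
    have hnT : n ∉ T := by
      intro hmem
      have h1 : T.filter (· < n) = T.erase n := by
        ext s
        simp only [Finset.mem_filter, Finset.mem_erase]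
        constructor
        · rintro ⟨hs, hlt⟩; exact ⟨by omega, hs⟩
        · rintro ⟨hne, hs⟩
          have := Finset.mem_range.1 (hsub hs)
          exact ⟨hs, by omega⟩
      have h2 := hgood n le_rfl
      rw [h1, Finset.card_erase_of_mem hmem, hcard] at h2
      have hm1 : 1 ≤ m := by
        by_contra h
        have : m = 0 := by omega
        subst this
        rw [Finset.card_eq_zero.1 hcard] at hmem
        simp at hmem
      have : (t+1) * (m - 1) + (t+1) = (t+1) * m := by
        have h3 : ∃ k, m = k + 1 := ⟨m - 1, by omega⟩
        obtain ⟨k, rfl⟩ := h3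
        simp [Nat.mul_succ]
      omega
    refine ⟨fun s hs => ?_, by rw [hcard], hgood⟩
    have := Finset.mem_range.1 (hsub hs)
    have : s ≠ n := fun h => hnT (h ▸ hs)
    rw [Finset.mem_range]
    omega
  · rintro ⟨hsub, hcard, hgood⟩
    have hcm : T.card = m := by
      have ht1 : 0 < t + 1 := by omega
      exact Nat.eq_of_mul_eq_mul_left ht1 (by omega)
    exact ⟨⟨fun s hs => by
      have := Finset.mem_range.1 (hsub hs)
      rw [Finset.mem_range]; omega, hcm⟩, hgood⟩

lemma ncard_NCA_eq (t : ℕ) (A : Finset ℕ) :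
    {P : Finset (Finset ℕ) | NCA t A P}.ncard = {S : Finset ℕ | GoodA t A S}.ncard := by
  have himg : mins '' {P : Finset (Finset ℕ) | NCA t A P} = {S : Finset ℕ | GoodA t A S} := by
    ext S
    simp only [Set.mem_image, Set.mem_setOf_eq]
    constructor
    · rintro ⟨P, hP, rfl⟩
      exact hP.good
    · intro hS
      obtain ⟨P, hP, hm⟩ := NCA_exists t A.card A rfl S hS
      exact ⟨P, hP, hm⟩
  have hinj : Set.InjOn mins {P : Finset (Finset ℕ) | NCA t A P} := by
    intro P hP Q hQ h
    exact NCA_injective t A.card A rfl P Q hP hQ h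
  rw [← himg, Set.ncard_image_of_injOn hinj]

lemma IsNCPart_iff_NCA (t n : ℕ) (P : Finset (Finset ℕ)) :
    IsNCPart t n P ↔ NCA t (Finset.range n) P := by
  unfold IsNCPart NCA
  constructor
  · rintro ⟨h1, h2, h3, h4⟩
    refine ⟨h1, fun i hi => h2 i (Finset.mem_range.1 hi), h3, ?_⟩
    intro a b c d hab hbc hcd B hB B' hB' ha hc hb hd
    by_contra hne
    exact h4 ⟨a, b, c, d, hab, hbc, hcd, B, hB, B', hB', hne, ha, hc, hb, hd⟩
  · rintro ⟨h1, h2, h3, h4⟩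
    refine ⟨h1, fun i hi => h2 i (Finset.mem_range.2 hi), h3, ?_⟩
    rintro ⟨a, b, c, d, hab, hbc, hcd, B, hB, B', hB', hne, ha, hc, hb, hd⟩
    exact hne (h4 a b c d hab hbc hcd B hB B' hB' ha hc hb hd)

theorem ncPartitions_card_fussCatalan (t : ℕ) (ht : 1 ≤ t) :
    (∀ m : ℕ, {P : Finset (Finset ℕ) | IsNCPart t ((t + 1) * m) P}.ncard
        = ((t + 1) * m).choose m / (t * m + 1)) ∧
    (∀ n : ℕ, ¬ (t + 1) ∣ n → {P : Finset (Finset ℕ) | IsNCPart t n P}.ncard = 0) := by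
  constructor
  · intro m
    classical
    set n := (t + 1) * m with hn
    have hset : {P : Finset (Finset ℕ) | IsNCPart t n P}
        = {P : Finset (Finset ℕ) | NCA t (Finset.range n) P} := by
      ext P
      simp only [Set.mem_setOf_eq]
      exact IsNCPart_iff_NCA t n P
    rw [hset, ncard_NCA_eq]
    have hGset : {S : Finset ℕ | GoodA t (Finset.range n) S} =
        ↑(((Finset.range (n+1)).powersetCard m).filter (fun T => Goodb t n T)) := by
      ext S
      simp only [Set.mem_setOf_eq, Finset.coe_filter, Set.mem_setOf_eq]
      rw [← mem_goodFinset_iff t m S, Finset.mem_filter]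
    rw [hGset, Set.ncard_coe_finset]
    set g := (((Finset.range (n+1)).powersetCard m).filter (fun T => Goodb t n T)).card
      with hg
    have hmul : g * (n + 1) = (n+1).choose m := card_good_mul t m
    have hml : m ≤ n := by
      rw [hn]
      exact Nat.le_mul_of_pos_left m (by omega)
    have hnm : n = t * m + m := by rw [hn]; ring
    have hch : (n+1) * n.choose m = (n+1).choose m * (n+1-m) := by
      have h1 := Nat.add_one_mul_choose_eq n (n - m)
      rw [Nat.choose_symm hml] at h1
      rw [show n - m + 1 = n + 1 - m by omega] at h1
      rw [Nat.choose_symm (show m ≤ n + 1 by omega)] at h1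
      exact h1
    have htm : n + 1 - m = t * m + 1 := by omega
    have key : g * (t*m+1) * (n+1) = n.choose m * (n+1) := by
      calc g * (t*m+1) * (n+1) = (g * (n+1)) * (t*m+1) := by ring
        _ = (n+1).choose m * (t*m+1) := by rw [hmul]
        _ = (n+1).choose m * (n+1-m) := by rw [htm]
        _ = (n+1) * n.choose m := hch.symm
        _ = n.choose m * (n+1) := by ring
    have hfin : g * (t*m+1) = n.choose m :=
      Nat.eq_of_mul_eq_mul_right (by omega) key
    exact (Nat.div_eq_of_eq_mul_left (by omega) hfin.symm).symm
  · intro n hdvd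
    have hempty : {P : Finset (Finset ℕ) | IsNCPart t n P} = ∅ := by
      rw [Set.eq_empty_iff_forall_notMem]
      intro P hP
      have hN := (IsNCPart_iff_NCA t n P).1 hP
      have hc := hN.card_eq
      rw [Finset.card_range] at hc
      exact hdvd ⟨P.card, hc⟩
    rw [hempty, Set.ncard_empty]
end

section
/- The number of lattice paths of length (t+1)n using steps (1,1) and (1,-t) that start and end on the x-axis and never go below the x-axis equals the Fuss-Catalan number binomial((t+1)n, n)/(tn+1). -/
/-- The value of a step: an upstep `(1,1)` is `true`, a downstep `(1,-t)` is `false`. -/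
def stepVal (t : ℕ) (b : Bool) : ℤ := if b then 1 else -(t : ℤ)

namespace FussAux

open Finset

lemma sum_take_add (l : List ℤ) (k j : ℕ) :
    (l.take (k + j)).sum = (l.take k).sum + ((l.drop k).take j).sum := by
  rw [List.take_add, List.sum_append]

lemma take_rotate_sum (l : List ℤ) (k j : ℕ) (hk : k ≤ l.length) (hj : j ≤ l.length) :
    ((l.rotate k).take j).sum =
      (if k + j ≤ l.length then (l.take (k + j)).sum - (l.take k).sum
        else l.sum + (l.take (k + j - l.length)).sum - (l.take k).sum) := by
  rw [List.rotate_eq_drop_append_take hk]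
  by_cases h : k + j ≤ l.length
  · rw [if_pos h, List.take_append_of_le_length (by simp; omega)]
    have := sum_take_add l k j; omega
  · rw [if_neg h, List.take_append, List.take_take,
      List.take_of_length_le (by simp; omega)]
    have hd : (l.drop k).length = l.length - k := List.length_drop
    have h1 : min (j - (l.drop k).length) k = k + j - l.length := by omega
    rw [h1, List.sum_append]
    have h4 : (l.take k).sum + (l.drop k).sum = l.sum := by
      rw [← List.sum_append, List.take_append_drop]
    omega

lemma sum_map_stepVal (t : ℕ) (l : List Bool) :
    (l.map (stepVal t)).sum = (l.count true : ℤ) - t * l.count false := by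
  induction l with
  | nil => simp
  | cons a l ih =>
    cases a <;> simp [stepVal, ih, List.count_cons] <;> ring

lemma count_tf (l : List Bool) : l.count true + l.count false = l.length := by
  induction l with
  | nil => simp
  | cons a l ih => cases a <;> simp [List.count_cons] <;> omega

lemma cycle_bad (M : ℕ) (f : ℕ → ℤ) (hf : ∀ i, f (i + M) = f i + 1)
    (k1 k2 : ℕ) (h12 : k1 < k2) (h2M : k2 < M)
    (g1 : ∀ j, 1 ≤ j → j ≤ M → f k1 < f (k1 + j))
    (g2 : ∀ j, 1 ≤ j → j ≤ M → f k2 < f (k2 + j)) : False := by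
  have hA : f k1 < f k2 := by
    have := g1 (k2 - k1) (by omega) (by omega)
    rwa [show k1 + (k2 - k1) = k2 by omega] at this
  have hB : f k2 < f k1 + 1 := by
    have := g2 (k1 + M - k2) (by omega) (by omega)
    rwa [show k2 + (k1 + M - k2) = k1 + M by omega, hf k1] at this
  omega

lemma cycle_exists_unique (M : ℕ) (hM : 0 < M) (f : ℕ → ℤ)
    (hf : ∀ i, f (i + M) = f i + 1) :
    ∃! k, k < M ∧ ∀ j, 1 ≤ j → j ≤ M → f k < f (k + j) := by
  classical
  have hne : ((Finset.range M).image f).Nonempty := by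
    simp [Finset.image_nonempty, Finset.nonempty_range_iff]; omega
  set m := ((Finset.range M).image f).min' hne with hm
  have hKne : ((Finset.range M).filter (fun k => f k = m)).Nonempty := by
    obtain ⟨x, hx, hfx⟩ := Finset.mem_image.1 (((Finset.range M).image f).min'_mem hne)
    exact ⟨x, Finset.mem_filter.2 ⟨hx, hfx⟩⟩
  set k := ((Finset.range M).filter (fun k => f k = m)).max' hKne with hk
  have hkmem : k ∈ (Finset.range M).filter (fun k => f k = m) := by
    rw [hk]; exact Finset.max'_mem _ _
  rw [Finset.mem_filter, Finset.mem_range] at hkmem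
  obtain ⟨hkM, hfk⟩ := hkmem
  have hmin : ∀ x, x < M → m ≤ f x := fun x hx =>
    Finset.min'_le _ _ (Finset.mem_image.2 ⟨x, Finset.mem_range.2 hx, rfl⟩)
  have hmax : ∀ x, x < M → f x = m → x ≤ k := by
    intro x hx hfx
    rw [hk]
    exact Finset.le_max' _ _ (Finset.mem_filter.2 ⟨Finset.mem_range.2 hx, hfx⟩)
  have hgood : ∀ j, 1 ≤ j → j ≤ M → f k < f (k + j) := by
    intro j hj1 hjM
    by_cases h : k + j < M
    · rcases lt_or_eq_of_le (hmin _ h) with h' | h'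
      · omega
      · exact absurd (hmax _ h h'.symm) (by omega)
    · have h2 : k + j - M < M := by omega
      have : f (k + j) = f (k + j - M) + 1 := by
        rw [← hf]; congr 1; omega
      have := hmin _ h2
      omega
  refine ⟨k, ⟨hkM, hgood⟩, ?_⟩
  rintro k' ⟨hk'M, hgood'⟩
  rcases lt_trichotomy k' k with h | h | h
  · exact absurd (cycle_bad M f hf k' k h hkM hgood' hgood) not_false
  · exact h
  · exact absurd (cycle_bad M f hf k k' h hk'M hgood hgood') not_false

/-- Dominance: all nonempty prefixes have positive sum. -/
def domP (t : ℕ) (w : List Bool) : Prop :=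
  ∀ j, 1 ≤ j → j ≤ w.length → 0 < ((w.take j).map (stepVal t)).sum

lemma exists_unique_rotate_dom (t n : ℕ) (w : List Bool)
    (hlen : w.length = (t + 1) * n + 1) (hc : w.count false = n) :
    ∃! k, k < (t + 1) * n + 1 ∧ domP t (w.rotate k) := by
  classical
  set N1 := (t + 1) * n + 1 with hN1
  set l : List ℤ := w.map (stepVal t) with hldef
  have hl : l.length = N1 := by simp [hldef, hlen]
  have hct : w.count true = t * n + 1 := by
    have := count_tf w
    have hmul : (t + 1) * n = t * n + n := by ring
    omega
  have hsum : l.sum = 1 := by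
    rw [hldef, sum_map_stepVal, hct, hc]; push_cast; ring_nf
  set f : ℕ → ℤ := fun i => (l.take (i % N1)).sum + (i / N1 : ℕ) with hfdef
  have hN1pos : 0 < N1 := by omega
  have hf : ∀ i, f (i + N1) = f i + 1 := by
    intro i
    simp only [hfdef, Nat.add_mod_right, Nat.add_div_right _ hN1pos]
    push_cast; ring
  have key : ∀ k, k < N1 → ∀ j, 1 ≤ j → j ≤ N1 →
      (((w.rotate k).take j).map (stepVal t)).sum = f (k + j) - f k := by
    intro k hk j hj1 hjN
    rw [List.map_take, List.map_rotate, ← hldef]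
    rw [take_rotate_sum l k j (by omega) (by omega)]
    have fval : ∀ i, f i = (l.take (i % N1)).sum + ((i / N1 : ℕ) : ℤ) := fun i => rfl
    have hfk : f k = (l.take k).sum := by
      rw [fval, Nat.mod_eq_of_lt hk, Nat.div_eq_of_lt hk]; simp
    by_cases h : k + j ≤ N1
    · rw [if_pos (by omega), hfk]
      rcases eq_or_lt_of_le h with h' | h'
      · have : f (k + j) = 1 := by
          rw [fval, h', Nat.mod_self, Nat.div_self hN1pos]; simp
        rw [this]
        have : l.take (k + j) = l := by rw [h', ← hl, List.take_length]
        rw [this, hsum]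
      · have : f (k + j) = (l.take (k + j)).sum := by
          rw [fval, Nat.mod_eq_of_lt h', Nat.div_eq_of_lt h']; simp
        rw [this]
    · rw [if_neg (by omega), hfk]
      have h1 : k + j - N1 < N1 := by omega
      have hmod : (k + j) % N1 = k + j - N1 := by
        rw [Nat.mod_eq_sub_mod (by omega), Nat.mod_eq_of_lt h1]
      have hdiv : (k + j) / N1 = 1 := by
        rw [Nat.div_eq_sub_div hN1pos (by omega), Nat.div_eq_of_lt h1]
      have : f (k + j) = (l.take (k + j - N1)).sum + 1 := by
        rw [fval, hmod, hdiv]; simp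
      rw [this, hl, hsum]; ring
  obtain ⟨k, ⟨hkM, hgood⟩, huniq⟩ := cycle_exists_unique N1 hN1pos f hf
  have hiff : ∀ k', k' < N1 → (domP t (w.rotate k') ↔
      ∀ j, 1 ≤ j → j ≤ N1 → f k' < f (k' + j)) := by
    intro k' hk'
    have hrl : (w.rotate k').length = N1 := by rw [List.length_rotate, hlen]
    constructor
    · intro hd j hj1 hjN
      have := hd j hj1 (by omega)
      rw [key k' hk' j hj1 hjN] at this; omega
    · intro hg j hj1 hjN
      rw [key k' hk' j hj1 (by omega)]
      have := hg j hj1 (by omega); omega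
  exact ⟨k, ⟨hkM, (hiff k hkM).2 hgood⟩,
    fun k' hk' => huniq k' ⟨hk'.1, (hiff k' hk'.1).1 hk'.2⟩⟩

lemma count_false_eq_aux (w : List Bool) :
    w.count false =
      (Finset.univ.filter fun i : Fin w.length => w.getD i.1 true = false).card := by
  induction w with
  | nil => simp
  | cons a l ih =>
    rw [Finset.card_filter]
    simp only [List.length_cons]
    rw [Fin.sum_univ_succ]
    simp only [Fin.val_zero, List.getD_cons_zero, Fin.val_succ, List.getD_cons_succ]
    rw [← Finset.card_filter, ← ih]
    cases a <;> simp [List.count_cons] <;> omega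
  
lemma count_false_eq (m : ℕ) (w : List Bool) (h : w.length = m) :
    w.count false =
      (Finset.univ.filter fun i : Fin m => w.getD i.1 true = false).card := by
  subst h; exact count_false_eq_aux w

end FussAux

theorem lukasiewicz_paths_card_fussCatalan (t n : ℕ) (ht : 1 ≤ t) :
    {l : List Bool | l.length = (t + 1) * n ∧
        (∀ i ≤ l.length, 0 ≤ ((l.take i).map (stepVal t)).sum) ∧
        (l.map (stepVal t)).sum = 0}.ncard
      = ((t + 1) * n).choose n / (t * n + 1) := by
  classical
  have hmul : (t + 1) * n = t * n + n := by ring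
  set N1 : ℕ := (t + 1) * n + 1 with hN1
  have hN1pos : 0 < N1 := by omega
  -- the three sets
  set S : Set (List Bool) := {l : List Bool | l.length = (t + 1) * n ∧
        (∀ i ≤ l.length, 0 ≤ ((l.take i).map (stepVal t)).sum) ∧
        (l.map (stepVal t)).sum = 0} with hSdef
  set A : Set (List Bool) := {w | w.length = N1 ∧ w.count false = n} with hAdef
  set D : Set (List Bool) := {w | (w.length = N1 ∧ w.count false = n) ∧ FussAux.domP t w}
    with hDdef
  have hSfin : S.Finite := (List.finite_length_eq Bool ((t + 1) * n)).subset fun l hl => hl.1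
  have hAfin : A.Finite := (List.finite_length_eq Bool N1).subset fun l hl => hl.1
  have hDfin : D.Finite := hAfin.subset fun l hl => hl.1
  -- counting lemma for S
  have hcount : ∀ l : List Bool, l.length = (t + 1) * n →
      (l.map (stepVal t)).sum = 0 → l.count false = n := by
    intro l h1 h2
    have h3 := FussAux.sum_map_stepVal t l
    have h4 := FussAux.count_tf l
    rw [h2] at h3
    have h5 : (l.count true : ℤ) = t * l.count false := by linarith
    have h6 : l.count true = t * l.count false := by exact_mod_cast h5
    have h7 : (t + 1) * l.count false = (t + 1) * n := by
      rw [add_mul, one_mul, ← h6, ← h1, ← h4]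
    exact Nat.eq_of_mul_eq_mul_left (by omega) h7
  -- S → D
  have hStoD : ∀ l ∈ S, (true :: l) ∈ D := by
    intro l hl
    obtain ⟨hl1, hl2, hl3⟩ := hl
    have hcf := hcount l hl1 hl3
    refine ⟨⟨by simp [hl1, hN1], by simpa using hcf⟩, ?_⟩
    intro j hj1 hj2
    obtain ⟨i, rfl⟩ := Nat.exists_eq_add_of_le hj1
    rw [Nat.add_comm 1 i, List.take_succ_cons]
    simp only [List.map_cons, List.sum_cons]
    have := hl2 i (by simp at hj2; omega)
    have hsv : stepVal t true = 1 := rfl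
    rw [hsv]; omega
  -- D → S
  have hDtoS : ∀ w ∈ D, w = true :: w.tail ∧ w.tail ∈ S := by
    intro w hw
    obtain ⟨⟨hw1, hw2⟩, hw3⟩ := hw
    match w, hw1 with
    | a :: w', hw1 =>
      have ha : a = true := by
        have := hw3 1 le_rfl (by simp)
        simp only [List.take_succ_cons, List.take_zero, List.map_cons, List.map_nil,
          List.sum_cons, List.sum_nil, add_zero] at this
        cases a
        · exfalso; simp [stepVal] at this; omega
        · rfl
      subst ha
      have hlenw' : w'.length = (t + 1) * n := by
        have := hw1; simp only [List.length_cons] at this; omega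
      have hct : (true :: w').count true = t * n + 1 := by
        have h1 := FussAux.count_tf (true :: w')
        have h2 : (true :: w').length = N1 := hw1
        simp only [List.length_cons] at h1 h2
        have h3 : (true :: w').count false = n := hw2
        omega
      have hsum : ((true :: w').map (stepVal t)).sum = 1 := by
        rw [FussAux.sum_map_stepVal, hct, hw2]; push_cast; ring
      have hsv : stepVal t true = 1 := rfl
      refine ⟨rfl, ?_, ?_, ?_⟩
      · simpa using hlenw'
      · intro i hi
        simp only [List.tail_cons] at hi
        have := hw3 (i + 1) (by omega) (by simp only [List.length_cons]; omega)
        rw [List.take_succ_cons] at this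
        simp only [List.map_cons, List.sum_cons, hsv] at this
        simp only [List.tail_cons]
        omega
      · simp only [List.map_cons, List.sum_cons, hsv] at hsum
        simp only [List.tail_cons]
        omega
  -- card S = card D
  have hSD : hSfin.toFinset.card = hDfin.toFinset.card := by
    apply Finset.card_bij' (i := fun l _ => true :: l) (j := fun w _ => w.tail)
    · intro l hl
      rw [Set.Finite.mem_toFinset] at *
      exact hStoD l hl
    · intro w hw
      rw [Set.Finite.mem_toFinset] at *
      exact (hDtoS w hw).2
    · intro l _; rfl
    · intro w hw
      rw [Set.Finite.mem_toFinset] at hw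
      exact ((hDtoS w hw).1).symm
  -- card A = card D * N1
  have hmodinj : ∀ i1 i2, i1 < N1 → i2 < N1 → (N1 - i1) % N1 = (N1 - i2) % N1 → i1 = i2 := by
    intro i1 i2 h1 h2 h
    by_cases e1 : i1 = 0 <;> by_cases e2 : i2 = 0
    · omega
    · rw [e1, Nat.sub_zero, Nat.mod_self, Nat.mod_eq_of_lt (by omega)] at h; omega
    · rw [e2, Nat.sub_zero, Nat.mod_self, Nat.mod_eq_of_lt (by omega)] at h; omega
    · rw [Nat.mod_eq_of_lt (by omega), Nat.mod_eq_of_lt (by omega)] at h; omega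
  have hrotback : ∀ (d : List Bool) (i : ℕ), d.length = N1 → i < N1 →
      (d.rotate i).rotate ((N1 - i) % N1) = d := by
    intro d i hd hi
    have hlrot : (d.rotate i).length = N1 := by rw [List.length_rotate, hd]
    rw [← hlrot, List.rotate_mod, hlrot, List.rotate_rotate,
      show i + (N1 - i) = N1 by omega, ← hd, List.rotate_length]
  have hAD : hAfin.toFinset.card = hDfin.toFinset.card * N1 := by
    rw [← Finset.card_range N1, ← Finset.card_product]
    apply (Finset.card_bij (i := fun (p : List Bool × ℕ) _ => p.1.rotate p.2) ?_ ?_ ?_).symm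
    · rintro ⟨d, i⟩ hp
      rw [Finset.mem_product, Set.Finite.mem_toFinset] at hp
      obtain ⟨⟨⟨hd1, hd2⟩, _⟩, _⟩ := hp
      rw [Set.Finite.mem_toFinset]
      exact ⟨by rw [List.length_rotate, hd1], by rw [(List.rotate_perm d i).count_eq, hd2]⟩
    · rintro ⟨d1, i1⟩ hp1 ⟨d2, i2⟩ hp2 heq
      rw [Finset.mem_product, Set.Finite.mem_toFinset, Finset.mem_range] at hp1 hp2
      obtain ⟨⟨⟨hd1l, hd1c⟩, hd1dom⟩, hi1⟩ := hp1
      obtain ⟨⟨⟨hd2l, hd2c⟩, hd2dom⟩, hi2⟩ := hp2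
      simp only at heq
      have hwlen : (d1.rotate i1).length = N1 := by rw [List.length_rotate, hd1l]
      have hwc : (d1.rotate i1).count false = n := by
        rw [(List.rotate_perm d1 i1).count_eq, hd1c]
      obtain ⟨k, -, huniq⟩ := FussAux.exists_unique_rotate_dom t n (d1.rotate i1) hwlen hwc
      have e1 : (d1.rotate i1).rotate ((N1 - i1) % N1) = d1 := hrotback d1 i1 hd1l hi1
      have e2 : (d1.rotate i1).rotate ((N1 - i2) % N1) = d2 := by
        rw [heq]; exact hrotback d2 i2 hd2l hi2
      have k1 := huniq ((N1 - i1) % N1) ⟨Nat.mod_lt _ hN1pos, by rw [e1]; exact hd1dom⟩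
      have k2 := huniq ((N1 - i2) % N1) ⟨Nat.mod_lt _ hN1pos, by rw [e2]; exact hd2dom⟩
      have hieq : i1 = i2 := hmodinj i1 i2 hi1 hi2 (k1.trans k2.symm)
      subst hieq
      have hdeq : d1 = d2 := e1.symm.trans e2
      rw [Prod.mk.injEq]
      exact ⟨hdeq, rfl⟩
    · intro w hw
      rw [Set.Finite.mem_toFinset] at hw
      obtain ⟨hw1, hw2⟩ := hw
      obtain ⟨k, ⟨hk, hdom⟩, -⟩ := FussAux.exists_unique_rotate_dom t n w hw1 hw2
      refine ⟨⟨w.rotate k, (N1 - k) % N1⟩, ?_, ?_⟩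
      · rw [Finset.mem_product, Set.Finite.mem_toFinset, Finset.mem_range]
        exact ⟨⟨⟨by rw [List.length_rotate, hw1],
          by rw [(List.rotate_perm w k).count_eq, hw2]⟩, hdom⟩, Nat.mod_lt _ hN1pos⟩
      · exact hrotback w k hw1 hk
  -- card A = N1.choose n
  have hAchoose : hAfin.toFinset.card = N1.choose n := by
    have hpc : (Finset.powersetCard n (Finset.univ : Finset (Fin N1))).card = N1.choose n := by
      rw [Finset.card_powersetCard, Finset.card_univ, Fintype.card_fin]
    rw [← hpc]
    apply Finset.card_bij'
      (i := fun w _ => Finset.univ.filter fun i : Fin N1 => w.getD i.1 true = false)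
      (j := fun s _ => List.ofFn fun i : Fin N1 => decide (i ∉ s))
    · intro w hw
      rw [Set.Finite.mem_toFinset] at hw
      rw [Finset.mem_powersetCard]
      exact ⟨Finset.filter_subset _ _, by rw [← FussAux.count_false_eq N1 w hw.1, hw.2]⟩
    · intro s hs
      rw [Finset.mem_powersetCard] at hs
      rw [Set.Finite.mem_toFinset]
      constructor
      · simp [hN1]
      · rw [FussAux.count_false_eq N1 _ (by simp [hN1])]
        have : (Finset.univ.filter fun i : Fin N1 =>
            (List.ofFn fun i : Fin N1 => decide (i ∉ s)).getD i.1 true = false) = s := by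
          ext i
          rw [Finset.mem_filter]
          rw [List.getD_eq_getElem _ _ (by have := i.2; simp only [List.length_ofFn]; omega), List.getElem_ofFn]
          simp
        rw [this, hs.2]
    · intro w hw
      rw [Set.Finite.mem_toFinset] at hw
      apply List.ext_getElem (by simp [hw.1, hN1])
      intro i h1 h2
      rw [List.getElem_ofFn]
      simp only [Finset.mem_filter, Finset.mem_univ, true_and, decide_not]
      rw [List.getD_eq_getElem _ _ (by omega)]
      cases hv : w[i] <;> simp [hv]
    · intro s hs
      rw [Finset.mem_powersetCard] at hs
      ext i
      rw [Finset.mem_filter]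
      rw [List.getD_eq_getElem _ _ (by have := i.2; simp only [List.length_ofFn]; omega), List.getElem_ofFn]
      simp
  -- final arithmetic
  have hDN : hDfin.toFinset.card * N1 = N1.choose n := by rw [← hAD, hAchoose]
  have e1 : N1 * ((t + 1) * n).choose (t * n) = N1.choose (t * n + 1) * (t * n + 1) :=
    Nat.add_one_mul_choose_eq ((t + 1) * n) (t * n)
  have e2 : ((t + 1) * n).choose (t * n) = ((t + 1) * n).choose n := by
    have : (t + 1) * n - n = t * n := by omega
    rw [← this, Nat.choose_symm (by omega)]
  have e3 : N1.choose n = N1.choose (t * n + 1) := by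
    have : N1 - n = t * n + 1 := by omega
    rw [← this, Nat.choose_symm (by omega)]
  have hfinal : hDfin.toFinset.card * (t * n + 1) = ((t + 1) * n).choose n := by
    have h9 : N1 * (hDfin.toFinset.card * (t * n + 1)) = N1 * ((t + 1) * n).choose n := by
      calc N1 * (hDfin.toFinset.card * (t * n + 1))
          = hDfin.toFinset.card * N1 * (t * n + 1) := by ring
        _ = N1.choose n * (t * n + 1) := by rw [hDN]
        _ = N1.choose (t * n + 1) * (t * n + 1) := by rw [e3]
        _ = N1 * ((t + 1) * n).choose (t * n) := by rw [e1]
        _ = N1 * ((t + 1) * n).choose n := by rw [e2]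
    exact Nat.eq_of_mul_eq_mul_left hN1pos h9
  rw [Set.ncard_eq_toFinset_card S hSfin, hSD, ← hfinal,
    Nat.mul_div_cancel _ (by omega : 0 < t * n + 1)]
end

section
/- With L the linear functional whose moments are the aerated Fuss-Catalan numbers (mu_{(t+1)m} = binomial((t+1)m,m)/(tm+1), zero otherwise), the integral L(prod_{i=1}^k U^{(t)}_{n_i}(x)) equals the number of noncrossing set partitions of the disjoint union [n_1] ⊔ ... ⊔ [n_k] in which every block has size t+1 and no block is entirely contained in a single [n_i]. -/
open Polynomial

/-- The `n`th moment: the number of noncrossing set partitions of `[n]` with all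
blocks of size `t+1` (these are aerated Fuss-Catalan numbers). -/
noncomputable def ncMoment (t n : ℕ) : ℚ :=
  ({P : Finset (Finset ℕ) | IsNCPart t n P}.ncard : ℚ)

/-- The linear functional on polynomials with moments `ncMoment`. -/
noncomputable def Lfun (t : ℕ) (p : Polynomial ℚ) : ℚ :=
  ∑ i ∈ p.support, p.coeff i * ncMoment t i

/-- The disjoint union `[n 0] ⊔ ⋯ ⊔ [n (k-1)]` is realized inside `{0,…,N-1}`
(`N = ∑ n i`), the `i`th part being the interval `[off i, off i + n i)`. -/
def offset (n : ℕ → ℕ) (i : ℕ) : ℕ := ∑ j ∈ Finset.range i, n j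

namespace NCAux

/-- `Forb l s B`: block `B` is contained in one of the parts of the list `l` of part
sizes, laid out as intervals starting at `s`. -/
def Forb : List ℕ → ℕ → Finset ℕ → Prop
  | [], _, _ => False
  | a :: l, s, B => B ⊆ Finset.Ico s (s + a) ∨ Forb l (s + a) B

def goodSet (t : ℕ) (l : List ℕ) : Set (Finset (Finset ℕ)) :=
  {P | IsNCPart t l.sum P ∧ ∀ B ∈ P, ¬ Forb l 0 B}

lemma Forb_append (l₁ l₂ : List ℕ) (s : ℕ) (B : Finset ℕ) :
    Forb (l₁ ++ l₂) s B ↔ Forb l₁ s B ∨ Forb l₂ (s + l₁.sum) B := by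
  induction l₁ generalizing s with
  | nil => simp [Forb]
  | cons a l ih => simp [Forb, ih, add_assoc, or_assoc]

lemma Forb_subset {l : List ℕ} {s : ℕ} {B : Finset ℕ} (h : Forb l s B) :
    B ⊆ Finset.Ico s (s + l.sum) := by
  induction l generalizing s with
  | nil => exact absurd h id
  | cons a l ih =>
    rcases h with h | h
    · exact h.trans (Finset.Ico_subset_Ico le_rfl (by simp [List.sum_cons, add_assoc]))
    · exact (ih h).trans (Finset.Ico_subset_Ico (by omega) (by simp [List.sum_cons]; omega))

lemma Forb_shift (l : List ℕ) (s d : ℕ) (B : Finset ℕ) :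
    Forb l (s + d) (B.image (· + d)) ↔ Forb l s B := by
  induction l generalizing s with
  | nil => simp [Forb]
  | cons a l ih =>
    simp only [Forb]
    constructor
    · rintro (h | h)
      · left; intro x hx
        have := h (Finset.mem_image_of_mem _ hx)
        simp only [Finset.mem_Ico] at this ⊢; omega
      · right; rw [show s + d + a = s + a + d by ring] at h; exact (ih (s+a)).mp h
    · rintro (h | h)
      · left; intro y hy
        simp only [Finset.mem_image] at hy
        obtain ⟨x, hx, rfl⟩ := hy
        have := h hx
        simp only [Finset.mem_Ico] at this ⊢; omega
      · right; rw [show s + d + a = s + a + d by ring]; exact (ih (s+a)).mpr h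

lemma Forb_iff_exists (l : List ℕ) (s : ℕ) (B : Finset ℕ) :
    Forb l s B ↔ ∃ i < l.length,
      B ⊆ Finset.Ico (s + (l.take i).sum) (s + (l.take i).sum + l.getD i 0) := by
  induction l generalizing s with
  | nil => simp [Forb]
  | cons a l ih =>
    simp only [Forb, ih]
    constructor
    · rintro (h | ⟨i, hi, hsub⟩)
      · exact ⟨0, by simp, by simpa using h⟩
      · exact ⟨i + 1, by simpa using hi, by simpa [add_assoc] using hsub⟩
    · rintro ⟨i, hi, hsub⟩
      match i with
      | 0 => exact Or.inl (by simpa using hsub)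
      | j + 1 => exact Or.inr ⟨j, by simpa using hi, by simpa [add_assoc] using hsub⟩

lemma finite_of_ncpart {t n : ℕ} {S : Set (Finset (Finset ℕ))}
    (hS : ∀ P ∈ S, IsNCPart t n P) : S.Finite := by
  apply Set.Finite.subset (Finset.finite_toSet ((Finset.range n).powerset.powerset))
  intro P hP
  simp only [Finset.mem_coe, Finset.mem_powerset]
  intro B hB
  simp only [Finset.mem_powerset]
  exact (hS P hP).1 B hB

lemma goodSet_finite (t : ℕ) (l : List ℕ) : (goodSet t l).Finite :=
  finite_of_ncpart (fun _ hP => hP.1)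

lemma block_unique {t n : ℕ} {P : Finset (Finset ℕ)} (h : IsNCPart t n P)
    {B B' : Finset ℕ} {x : ℕ} (hB : B ∈ P) (hB' : B' ∈ P) (hx : x ∈ B) (hx' : x ∈ B') :
    B = B' := by
  have hxn : x < n := Finset.mem_range.mp (h.1 B hB hx)
  obtain ⟨C, _, hu⟩ := h.2.1 x hxn
  rw [hu B ⟨hB, hx⟩, hu B' ⟨hB', hx'⟩]

end NCAux

namespace NCAux

lemma Lfun_eq_sum_range (t : ℕ) (p : Polynomial ℚ) {M : ℕ} (h : p.natDegree < M) :
    Lfun t p = ∑ i ∈ Finset.range M, p.coeff i * ncMoment t i := by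
  unfold Lfun
  apply Finset.sum_subset (Polynomial.supp_subset_range h)
  intro i _ hi
  rw [Polynomial.notMem_support_iff.mp hi, zero_mul]

lemma Lfun_sub (t : ℕ) (p q : Polynomial ℚ) : Lfun t (p - q) = Lfun t p - Lfun t q := by
  set M := (p - q).natDegree ⊔ (p.natDegree ⊔ q.natDegree) + 1 with hM
  rw [Lfun_eq_sum_range t p (Nat.lt_succ_of_le (le_sup_of_le_right le_sup_left)),
    Lfun_eq_sum_range t q (Nat.lt_succ_of_le (le_sup_of_le_right le_sup_right)),
    Lfun_eq_sum_range t (p - q) (Nat.lt_succ_of_le le_sup_left), ← Finset.sum_sub_distrib]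
  congr 1; ext i
  rw [Polynomial.coeff_sub, sub_mul]

lemma Lfun_X_pow (t M : ℕ) : Lfun t (X ^ M : Polynomial ℚ) = ncMoment t M := by
  unfold Lfun
  rw [Polynomial.support_X_pow, Finset.sum_singleton,
    Polynomial.coeff_X_pow, if_pos rfl, one_mul]

/-- Base case: if all parts have size ≤ t, no block fits inside a part. -/
lemma goodSet_base (t : ℕ) (l : List ℕ) (hl : ∀ x ∈ l, x ≤ t) :
    goodSet t l = {P | IsNCPart t l.sum P} := by
  ext P
  simp only [goodSet, Set.mem_setOf_eq, and_iff_left_iff_imp]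
  intro hP B hB hF
  rw [Forb_iff_exists] at hF
  obtain ⟨i, hi, hsub⟩ := hF
  have hcard : B.card ≤ (Finset.Ico ((l.take i).sum) ((l.take i).sum + l.getD i 0)).card := by
    apply Finset.card_le_card; simpa using hsub
  rw [hP.2.2.1 B hB, Nat.card_Ico] at hcard
  have hmem : l.getD i 0 ∈ l := by
    rw [List.getD_eq_getElem l 0 hi]; exact List.getElem_mem hi
  have : l.getD i 0 ≤ t := hl _ hmem
  omega

end NCAux
namespace NCAux

lemma gap_lemma {t N o m : ℕ} (hm : t ≤ m) {P : Finset (Finset ℕ)}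
    (hP : IsNCPart t N P)
    (hno : ∀ B ∈ P, ¬ B ⊆ Finset.Ico o (o + m))
    {B : Finset ℕ} (hB : B ∈ P) (hBI : B ⊆ Finset.Ico o (o + m + 1)) :
    B = Finset.Icc (o + m - t) (o + m) := by
  have hcard : B.card = t + 1 := hP.2.2.1 B hB
  have hne : B.Nonempty := Finset.card_pos.mp (by omega)
  have hq : o + m ∈ B := by
    by_contra hq
    refine hno B hB (fun x hx => ?_)
    have h1 := hBI hx
    simp only [Finset.mem_Ico] at h1 ⊢
    have : x ≠ o + m := fun h => hq (h ▸ hx)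
    omega
  set a₀ := B.min' hne with ha₀
  have ha₀B : a₀ ∈ B := B.min'_mem hne
  have ha₀o : o ≤ a₀ := (Finset.mem_Ico.mp (hBI ha₀B)).1
  have hfill : ∀ x, a₀ ≤ x → x ≤ o + m → x ∈ B := by
    intro x hax hxm
    by_contra hxB
    have hax' : a₀ < x := lt_of_le_of_ne hax (fun h => hxB (h ▸ ha₀B))
    have hxq : x < o + m := lt_of_le_of_ne hxm (fun h => hxB (h ▸ hq))
    -- a: largest element of B below x
    have hAne : (B.filter (· < x)).Nonempty := ⟨a₀, Finset.mem_filter.mpr ⟨ha₀B, hax'⟩⟩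
    set a := (B.filter (· < x)).max' hAne with ha
    have haB : a ∈ B := (Finset.mem_filter.mp ((B.filter (· < x)).max'_mem hAne)).1
    have hax2 : a < x := (Finset.mem_filter.mp ((B.filter (· < x)).max'_mem hAne)).2
    -- c: smallest element of B above x
    have hCne : (B.filter (x < ·)).Nonempty := ⟨o + m, Finset.mem_filter.mpr ⟨hq, hxq⟩⟩
    set c := (B.filter (x < ·)).min' hCne with hc
    have hcB : c ∈ B := (Finset.mem_filter.mp ((B.filter (x < ·)).min'_mem hCne)).1
    have hxc : x < c := (Finset.mem_filter.mp ((B.filter (x < ·)).min'_mem hCne)).2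
    have hcN : c < N := Finset.mem_range.mp (hP.1 B hB hcB)
    obtain ⟨B', ⟨hB'P, hxB'⟩, _⟩ := hP.2.1 x (by omega)
    have hBB' : B ≠ B' := fun h => hxB (h ▸ hxB')
    have hsub : ∀ y ∈ B', a < y ∧ y < c := by
      intro y hyB'
      have hya : y ≠ a := fun h =>
        hBB' (block_unique hP hB hB'P haB (h ▸ hyB'))
      have hyc : y ≠ c := fun h =>
        hBB' (block_unique hP hB hB'P hcB (h ▸ hyB'))
      constructor
      · by_contra hy
        push_neg at hy
        have hya' : y < a := lt_of_le_of_ne hy hya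
        exact hP.2.2.2 ⟨y, a, x, c, hya', hax2, hxc,
          B', hB'P, B, hB, hBB'.symm, hyB', hxB', haB, hcB⟩
      · by_contra hy
        push_neg at hy
        have hyc' : c < y := lt_of_le_of_ne hy (Ne.symm hyc)
        exact hP.2.2.2 ⟨a, x, c, y, hax2, hxc, hyc',
          B, hB, B', hB'P, hBB', haB, hcB, hxB', hyB'⟩
    refine hno B' hB'P (fun y hy => ?_)
    obtain ⟨h1, h2⟩ := hsub y hy
    have hcm : c ≤ o + m := by
      have := Finset.mem_Ico.mp (hBI hcB); omega
    have haa : a₀ ≤ a := B.min'_le a haB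
    simp only [Finset.mem_Ico]
    omega
  -- B = Icc a₀ (o+m)
  have hBeq : B = Finset.Icc a₀ (o + m) := by
    apply Finset.Subset.antisymm
    · intro x hx
      have h1 := Finset.mem_Ico.mp (hBI hx)
      exact Finset.mem_Icc.mpr ⟨B.min'_le x hx, by omega⟩
    · intro x hx
      obtain ⟨h1, h2⟩ := Finset.mem_Icc.mp hx
      exact hfill x h1 h2
  have : (Finset.Icc a₀ (o + m)).card = o + m + 1 - a₀ := Nat.card_Icc _ _
  rw [hBeq] at hcard ⊢
  rw [this] at hcard
  have haq : a₀ ≤ o + m := B.min'_le _ hq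
  congr 1
  omega

end NCAux
namespace NCAux

def psi (c t x : ℕ) : ℕ := if x < c then x else x + (t + 1)
def phi (c t x : ℕ) : ℕ := if x < c then x else x - (t + 1)

lemma psi_strictMono (c t : ℕ) : StrictMono (psi c t) := by
  intro x y h; unfold psi; split <;> split <;> omega

lemma psi_injective (c t : ℕ) : Function.Injective (psi c t) :=
  (psi_strictMono c t).injective

lemma phi_psi (c t x : ℕ) : phi c t (psi c t x) = x := by
  rcases lt_or_ge x c with h | h
  · simp [psi, phi, h]
  · simp only [psi, phi, if_neg (not_lt.mpr h),
      if_neg (show ¬ x + (t + 1) < c by omega)]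
    omega

lemma psi_not_mem_Icc (c t x : ℕ) : psi c t x ∉ Finset.Icc c (c + t) := by
  unfold psi; split <;> simp only [Finset.mem_Icc] <;> omega

lemma psi_phi (c t : ℕ) {x : ℕ} (hx : x ∉ Finset.Icc c (c + t)) :
    psi c t (phi c t x) = x := by
  simp only [Finset.mem_Icc, not_and, not_le] at hx
  rcases lt_or_ge x c with h | h
  · simp [psi, phi, h]
  · have hx' := hx h
    simp only [psi, phi, if_neg (not_lt.mpr h),
      if_neg (show ¬ x - (t + 1) < c by omega)]
    omega

lemma phi_lt (c t : ℕ) {x y : ℕ} (hx : x ∉ Finset.Icc c (c + t))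
    (hy : y ∉ Finset.Icc c (c + t)) (h : x < y) : phi c t x < phi c t y := by
  simp only [Finset.mem_Icc, not_and, not_le] at hx hy
  unfold phi; split <;> split <;> omega

lemma image_congr_id {f : ℕ → ℕ} {B : Finset ℕ} (h : ∀ x ∈ B, f x = x) :
    B.image f = B := by
  ext y
  simp only [Finset.mem_image]
  constructor
  · rintro ⟨x, hx, rfl⟩; rwa [h x hx]
  · intro hy; exact ⟨y, hy, h y hy⟩

lemma psi_eq_of_lt {c t x : ℕ} (h : x < c) : psi c t x = x := if_pos h
lemma phi_eq_of_lt {c t x : ℕ} (h : x < c) : phi c t x = x := if_pos h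
lemma psi_eq_of_ge {c t x : ℕ} (h : c ≤ x) : psi c t x = x + (t + 1) :=
  if_neg (not_lt.mpr h)
lemma phi_eq_of_ge {c t x : ℕ} (h : c ≤ x) : phi c t x = x - (t + 1) :=
  if_neg (not_lt.mpr h)

end NCAux
namespace NCAux

lemma image_congr_id' {α : Type*} [DecidableEq α] {f : α → α} {B : Finset α}
    (h : ∀ x ∈ B, f x = x) : B.image f = B := by
  ext y
  simp only [Finset.mem_image]
  constructor
  · rintro ⟨x, hx, rfl⟩; rwa [h x hx]
  · intro hy; exact ⟨y, hy, h y hy⟩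

lemma psi_lt_N {c t N' : ℕ} {x : ℕ} (hx : x < N') : psi c t x < N' + (t + 1) := by
  unfold psi; split <;> omega

lemma phi_lt_N {c t N' : ℕ} {i : ℕ} (hi : i < N' + (t + 1)) (hc : c ≤ N')
    (hiB : i ∉ Finset.Icc c (c + t)) : phi c t i < N' := by
  simp only [Finset.mem_Icc, not_and, not_le] at hiB
  rcases lt_or_ge i c with h | h
  · rw [phi_eq_of_lt h]; omega
  · have := hiB h; rw [phi_eq_of_ge h]; omega

lemma bij_ncard (t : ℕ) (ht : 1 ≤ t) (r : ℕ) (l₁ l₂ : List ℕ) :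
    {P | P ∈ goodSet t (l₁ ++ (r + t) :: 1 :: l₂) ∧
        Finset.Icc (l₁.sum + r) (l₁.sum + r + t) ∈ P}.ncard
      = (goodSet t (l₁ ++ r :: l₂)).ncard := by
  set o := l₁.sum with ho
  set c := o + r with hcdef
  set N' := c + l₂.sum with hN'def
  set N := N' + (t + 1) with hNdef
  set Bq : Finset ℕ := Finset.Icc c (c + t) with hBqdef
  have hcN' : c ≤ N' := by omega
  have hsum1 : (l₁ ++ (r + t) :: 1 :: l₂).sum = N := by
    simp [List.sum_append, List.sum_cons, hNdef, hN'def, hcdef, ho]; omega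
  have hsum2 : (l₁ ++ r :: l₂).sum = N' := by
    simp [List.sum_append, List.sum_cons, hN'def, hcdef, ho]; omega
  have e1 : o + (r + t) = c + t := by omega
  have hforb1 : ∀ B : Finset ℕ, Forb (l₁ ++ (r + t) :: 1 :: l₂) 0 B ↔
      (Forb l₁ 0 B ∨ B ⊆ Finset.Ico o (c + t) ∨ B ⊆ Finset.Ico (c + t) (c + t + 1) ∨
        Forb l₂ (c + t + 1) B) := by
    intro B
    rw [Forb_append]
    simp only [Forb, zero_add, ← ho, e1, or_assoc]
  have hforb2 : ∀ B : Finset ℕ, Forb (l₁ ++ r :: l₂) 0 B ↔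
      (Forb l₁ 0 B ∨ B ⊆ Finset.Ico o c ∨ Forb l₂ c B) := by
    intro B
    rw [Forb_append]
    simp only [Forb, zero_add, ← ho, ← hcdef, or_assoc]
  have hmem1 : ∀ P : Finset (Finset ℕ),
      P ∈ goodSet t (l₁ ++ (r + t) :: 1 :: l₂) ↔
        (IsNCPart t N P ∧ ∀ B ∈ P, ¬ (Forb l₁ 0 B ∨ B ⊆ Finset.Ico o (c + t) ∨
          B ⊆ Finset.Ico (c + t) (c + t + 1) ∨ Forb l₂ (c + t + 1) B)) := by
    intro P
    unfold goodSet
    rw [Set.mem_setOf_eq, hsum1]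
    constructor
    · rintro ⟨h1, h2⟩; exact ⟨h1, fun B hB hx => h2 B hB ((hforb1 B).mpr hx)⟩
    · rintro ⟨h1, h2⟩; exact ⟨h1, fun B hB hF => h2 B hB ((hforb1 B).mp hF)⟩
  have hmem2 : ∀ P : Finset (Finset ℕ),
      P ∈ goodSet t (l₁ ++ r :: l₂) ↔
        (IsNCPart t N' P ∧ ∀ B ∈ P, ¬ (Forb l₁ 0 B ∨ B ⊆ Finset.Ico o c ∨
          Forb l₂ c B)) := by
    intro P
    unfold goodSet
    rw [Set.mem_setOf_eq, hsum2]
    constructor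
    · rintro ⟨h1, h2⟩; exact ⟨h1, fun B hB hx => h2 B hB ((hforb2 B).mpr hx)⟩
    · rintro ⟨h1, h2⟩; exact ⟨h1, fun B hB hF => h2 B hB ((hforb2 B).mp hF)⟩
  set g : Finset ℕ → Finset ℕ := Finset.image (psi c t) with hg
  set F : Finset (Finset ℕ) → Finset (Finset ℕ) := fun P' => insert Bq (P'.image g)
    with hF
  have hcBq : c ∈ Bq := Finset.mem_Icc.mpr ⟨le_rfl, Nat.le_add_right _ _⟩
  have hctBq : c + t ∈ Bq := Finset.mem_Icc.mpr ⟨Nat.le_add_right _ _, le_rfl⟩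
  have hBq_ne_img : ∀ B' : Finset ℕ, g B' ≠ Bq := by
    intro B' h
    have hc' : c ∈ g B' := h ▸ hcBq
    obtain ⟨x, _, hxe⟩ := Finset.mem_image.mp hc'
    exact psi_not_mem_Icc c t x (by rw [hxe]; exact hcBq)
  -- MapsTo
  have hmapsTo : ∀ P' ∈ goodSet t (l₁ ++ r :: l₂),
      F P' ∈ {P | P ∈ goodSet t (l₁ ++ (r + t) :: 1 :: l₂) ∧
        Finset.Icc (l₁.sum + r) (l₁.sum + r + t) ∈ P} := by
    intro P' hP'
    rw [hmem2] at hP'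
    obtain ⟨⟨h1, h2, h3, h4⟩, hforb⟩ := hP'
    have hblock_range : ∀ B' ∈ P', ∀ x ∈ B', x < N' := by
      intro B' hB' x hx; exact Finset.mem_range.mp (h1 B' hB' hx)
    refine ⟨(hmem1 _).mpr ⟨⟨?_, ?_, ?_, ?_⟩, ?_⟩, Finset.mem_insert_self _ _⟩
    · -- blocks in range N
      intro B hB
      rcases Finset.mem_insert.mp hB with rfl | hB'
      · intro x hx
        have := Finset.mem_Icc.mp hx
        exact Finset.mem_range.mpr (by omega)
      · obtain ⟨B', hB'm, rfl⟩ := Finset.mem_image.mp hB'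
        intro y hy
        obtain ⟨x, hx, rfl⟩ := Finset.mem_image.mp hy
        exact Finset.mem_range.mpr (psi_lt_N (hblock_range B' hB'm x hx))
    · -- partition
      intro i hi
      by_cases hiB : i ∈ Bq
      · refine ⟨Bq, ⟨Finset.mem_insert_self _ _, hiB⟩, ?_⟩
        rintro C ⟨hC, hiC⟩
        rcases Finset.mem_insert.mp hC with rfl | hC'
        · rfl
        · obtain ⟨B', _, rfl⟩ := Finset.mem_image.mp hC'
          obtain ⟨x, _, rfl⟩ := Finset.mem_image.mp hiC
          exact absurd hiB (psi_not_mem_Icc c t x)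
      · have hphi : phi c t i < N' := phi_lt_N hi hcN' hiB
        obtain ⟨B', ⟨hB'P, hxB'⟩, huniq⟩ := h2 (phi c t i) hphi
        refine ⟨g B', ⟨Finset.mem_insert_of_mem (Finset.mem_image_of_mem g hB'P), ?_⟩, ?_⟩
        · have : psi c t (phi c t i) = i := psi_phi c t hiB
          rw [← this]
          exact Finset.mem_image_of_mem _ hxB'
        · rintro C ⟨hC, hiC⟩
          rcases Finset.mem_insert.mp hC with rfl | hC'
          · exact absurd hiC hiB
          · obtain ⟨B₂, hB₂, rfl⟩ := Finset.mem_image.mp hC'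
            obtain ⟨x, hx, hxe⟩ := Finset.mem_image.mp hiC
            have hxphi : x = phi c t i := by rw [← hxe, phi_psi]
            rw [huniq B₂ ⟨hB₂, hxphi ▸ hx⟩]
    · -- cards
      intro B hB
      rcases Finset.mem_insert.mp hB with rfl | hB'
      · rw [hBqdef, Nat.card_Icc]; omega
      · obtain ⟨B', hB'm, rfl⟩ := Finset.mem_image.mp hB'
        rw [hg, Finset.card_image_of_injective _ (psi_injective c t)]
        exact h3 B' hB'm
    · -- noncrossing
      rintro ⟨a, b, u, v, hab, hbu, huv, C, hC, C', hC', hne, haC, huC, hbC', hvC'⟩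
      have himg_mem : ∀ (B' : Finset ℕ) (y : ℕ), y ∈ g B' → y ∉ Bq := by
        rintro B' y hy
        obtain ⟨x, _, rfl⟩ := Finset.mem_image.mp hy
        exact psi_not_mem_Icc c t x
      rcases Finset.mem_insert.mp hC with rfl | hCimg
      · -- C = Bq : a, u ∈ Bq, b strictly between, b ∈ C' which is an image
        have hC'img : C' ∈ P'.image g := by
          rcases Finset.mem_insert.mp hC' with rfl | h
          · exact absurd rfl hne
          · exact h
        obtain ⟨B₂, _, rfl⟩ := Finset.mem_image.mp hC'img
        have hbBq : b ∈ Bq := by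
          have h1' := Finset.mem_Icc.mp haC
          have h2' := Finset.mem_Icc.mp huC
          exact Finset.mem_Icc.mpr ⟨by omega, by omega⟩
        exact himg_mem B₂ b hbC' hbBq
      · rcases Finset.mem_insert.mp hC' with rfl | hC'img
        · -- C' = Bq : b, v ∈ Bq, u strictly between, u ∈ C image
          obtain ⟨B₁, _, rfl⟩ := Finset.mem_image.mp hCimg
          have huBq : u ∈ Bq := by
            have h1' := Finset.mem_Icc.mp hbC'
            have h2' := Finset.mem_Icc.mp hvC'
            exact Finset.mem_Icc.mpr ⟨by omega, by omega⟩
          exact himg_mem B₁ u huC huBq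
        · obtain ⟨B₁, hB₁, rfl⟩ := Finset.mem_image.mp hCimg
          obtain ⟨B₂, hB₂, rfl⟩ := Finset.mem_image.mp hC'img
          have hmem_phi : ∀ (B' : Finset ℕ) (y : ℕ), y ∈ g B' →
              (phi c t y ∈ B' ∧ y ∉ Finset.Icc c (c + t)) := by
            rintro B' y hy
            obtain ⟨x, hx, rfl⟩ := Finset.mem_image.mp hy
            rw [phi_psi]
            exact ⟨hx, psi_not_mem_Icc c t x⟩
          obtain ⟨haB₁, hna⟩ := hmem_phi _ _ haC
          obtain ⟨huB₁, hnu⟩ := hmem_phi _ _ huC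
          obtain ⟨hbB₂, hnb⟩ := hmem_phi _ _ hbC'
          obtain ⟨hvB₂, hnv⟩ := hmem_phi _ _ hvC'
          have hBne : B₁ ≠ B₂ := fun h => hne (h ▸ rfl)
          exact h4 ⟨phi c t a, phi c t b, phi c t u, phi c t v,
            phi_lt c t hna hnb hab, phi_lt c t hnb hnu hbu, phi_lt c t hnu hnv huv,
            B₁, hB₁, B₂, hB₂, hBne, haB₁, huB₁, hbB₂, hvB₂⟩
    · -- no block inside a part
      intro B hB
      rcases Finset.mem_insert.mp hB with rfl | hBimg
      · rintro (h | h | h | h)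
        · have := Forb_subset h hctBq
          simp only [Finset.mem_Ico] at this; omega
        · have := h hctBq
          simp only [Finset.mem_Ico] at this; omega
        · have := h hcBq
          simp only [Finset.mem_Ico] at this; omega
        · have := Forb_subset h hctBq
          simp only [Finset.mem_Ico] at this; omega
      · obtain ⟨B', hB', rfl⟩ := Finset.mem_image.mp hBimg
        rintro (h | h | h | h)
        · -- inside l₁ region: psi = id there
          have hsub := Forb_subset h
          have hlow : ∀ x ∈ B', x < c := by
            intro x hx
            have hmem := hsub (Finset.mem_image_of_mem (psi c t) hx)
            simp only [Finset.mem_Ico, zero_add] at hmem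
            by_contra hge
            rw [psi_eq_of_ge (le_of_not_gt hge)] at hmem
            omega
          have : g B' = B' := image_congr_id' (fun x hx => psi_eq_of_lt (hlow x hx))
          rw [this] at h
          exact hforb B' hB' (Or.inl h)
        · have hlow : ∀ x ∈ B', x < c := by
            intro x hx
            have hmem := h (Finset.mem_image_of_mem (psi c t) hx)
            simp only [Finset.mem_Ico] at hmem
            by_contra hge
            rw [psi_eq_of_ge (le_of_not_gt hge)] at hmem
            omega
          have heq : g B' = B' := image_congr_id' (fun x hx => psi_eq_of_lt (hlow x hx))
          refine hforb B' hB' (Or.inr (Or.inl (fun x hx => ?_)))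
          have hmem := h (Finset.mem_image_of_mem (psi c t) hx)
          rw [psi_eq_of_lt (hlow x hx)] at hmem
          simp only [Finset.mem_Ico] at hmem ⊢
          exact ⟨hmem.1, hlow x hx⟩
        · have hcard : (g B').card ≤ 1 := by
            calc (g B').card ≤ (Finset.Ico (c + t) (c + t + 1)).card :=
                  Finset.card_le_card h
            _ = 1 := by rw [Nat.card_Ico]; omega
          rw [hg, Finset.card_image_of_injective _ (psi_injective c t), h3 B' hB'] at hcard
          omega
        · have hsub := Forb_subset h
          have hhigh : ∀ x ∈ B', c ≤ x := by
            intro x hx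
            have hmem := hsub (Finset.mem_image_of_mem (psi c t) hx)
            simp only [Finset.mem_Ico] at hmem
            by_contra hlt
            rw [psi_eq_of_lt (lt_of_not_ge hlt)] at hmem
            omega
          have heq : g B' = B'.image (· + (t + 1)) := by
            apply Finset.image_congr
            intro x hx
            exact psi_eq_of_ge (hhigh x hx)
          rw [heq, show c + t + 1 = c + (t + 1) by omega, Forb_shift] at h
          exact hforb B' hB' (Or.inr (Or.inr h))
  -- Injectivity
  have hinj : Set.InjOn F (goodSet t (l₁ ++ r :: l₂)) := by
    intro P₁ _ P₂ _ hFeq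
    have himg : P₁.image g = P₂.image g := by
      have hside : ∀ Q₁ Q₂ : Finset (Finset ℕ),
          insert Bq (Q₁.image g) = insert Bq (Q₂.image g) →
          Q₁.image g ⊆ Q₂.image g := by
        intro Q₁ Q₂ heq C hC
        have hCne : C ≠ Bq := by
          obtain ⟨B', _, rfl⟩ := Finset.mem_image.mp hC
          exact hBq_ne_img B'
        have : C ∈ insert Bq (Q₂.image g) := heq ▸ Finset.mem_insert_of_mem hC
        rcases Finset.mem_insert.mp this with rfl | h
        · exact absurd rfl hCne
        · exact h
      exact Finset.Subset.antisymm (hside P₁ P₂ hFeq) (hside P₂ P₁ hFeq.symm)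
    exact Finset.image_injective (Finset.image_injective (psi_injective c t)) himg
  -- Surjectivity
  have hsurj : Set.SurjOn F (goodSet t (l₁ ++ r :: l₂))
      {P | P ∈ goodSet t (l₁ ++ (r + t) :: 1 :: l₂) ∧
        Finset.Icc (l₁.sum + r) (l₁.sum + r + t) ∈ P} := by
    rintro P ⟨hPgood, hBqP⟩
    rw [hmem1] at hPgood
    obtain ⟨⟨h1, h2, h3, h4⟩, hforb⟩ := hPgood
    set P' : Finset (Finset ℕ) := (P.erase Bq).image (Finset.image (phi c t)) with hP'
    have hnotIcc : ∀ B ∈ P.erase Bq, ∀ x ∈ B, x ∉ Finset.Icc c (c + t) := by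
      intro B hB x hx hxIcc
      exact (Finset.ne_of_mem_erase hB)
        (block_unique ⟨h1, h2, h3, h4⟩ (Finset.mem_of_mem_erase hB) hBqP hx hxIcc)
    have hback : ∀ B ∈ P.erase Bq, (B.image (phi c t)).image (psi c t) = B := by
      intro B hB
      rw [Finset.image_image]
      exact image_congr_id' (fun x hx => psi_phi c t (hnotIcc B hB x hx))
    have hFP : F P' = P := by
      have : P'.image g = P.erase Bq := by
        rw [hP', Finset.image_image]
        exact image_congr_id' (fun B hB => hback B hB)
      show insert Bq (P'.image g) = P
      rw [this, Finset.insert_erase hBqP]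
    refine ⟨P', ?_, hFP⟩
    rw [hmem2]
    have hrange : ∀ B ∈ P.erase Bq, ∀ x ∈ B, x < N := by
      intro B hB x hx
      exact Finset.mem_range.mp (h1 B (Finset.mem_of_mem_erase hB) hx)
    refine ⟨⟨?_, ?_, ?_, ?_⟩, ?_⟩
    · intro C hC
      obtain ⟨B, hB, rfl⟩ := Finset.mem_image.mp hC
      intro y hy
      obtain ⟨x, hx, rfl⟩ := Finset.mem_image.mp hy
      exact Finset.mem_range.mpr (phi_lt_N (hrange B hB x hx) hcN' (hnotIcc B hB x hx))
    · intro j hj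
      have hpsij : psi c t j < N := psi_lt_N hj
      have hpsij_notIcc := psi_not_mem_Icc c t j
      obtain ⟨B, ⟨hBP, hpsijB⟩, huniq⟩ := h2 (psi c t j) hpsij
      have hBne : B ≠ Bq := by
        rintro rfl
        exact hpsij_notIcc hpsijB
      have hBerase : B ∈ P.erase Bq := Finset.mem_erase.mpr ⟨hBne, hBP⟩
      refine ⟨B.image (phi c t), ⟨Finset.mem_image_of_mem _ hBerase, ?_⟩, ?_⟩
      · have : phi c t (psi c t j) = j := phi_psi c t j
        rw [← this]
        exact Finset.mem_image_of_mem _ hpsijB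
      · rintro C ⟨hC, hjC⟩
        obtain ⟨B₂, hB₂, rfl⟩ := Finset.mem_image.mp hC
        obtain ⟨x, hx, hxe⟩ := Finset.mem_image.mp hjC
        have hxj : x = psi c t j := by
          rw [← psi_phi c t (hnotIcc B₂ hB₂ x hx), hxe]
        have : B₂ = B := huniq B₂ ⟨Finset.mem_of_mem_erase hB₂, hxj ▸ hx⟩
        rw [this]
    · intro C hC
      obtain ⟨B, hB, rfl⟩ := Finset.mem_image.mp hC
      rw [Finset.card_image_of_injOn, h3 B (Finset.mem_of_mem_erase hB)]
      intro x hx y hy hxy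
      rw [← psi_phi c t (hnotIcc B hB x hx), ← psi_phi c t (hnotIcc B hB y hy), hxy]
    · rintro ⟨a, b, u, v, hab, hbu, huv, C, hC, C', hC', hne, haC, huC, hbC', hvC'⟩
      obtain ⟨B₁, hB₁, rfl⟩ := Finset.mem_image.mp hC
      obtain ⟨B₂, hB₂, rfl⟩ := Finset.mem_image.mp hC'
      have hlift : ∀ (B : Finset ℕ), B ∈ P.erase Bq → ∀ y ∈ B.image (phi c t),
          psi c t y ∈ B := by
        intro B hB y hy
        obtain ⟨x, hx, rfl⟩ := Finset.mem_image.mp hy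
        rwa [psi_phi c t (hnotIcc B hB x hx)]
      have hBne : B₁ ≠ B₂ := fun h => hne (h ▸ rfl)
      exact h4 ⟨psi c t a, psi c t b, psi c t u, psi c t v,
        psi_strictMono c t hab, psi_strictMono c t hbu, psi_strictMono c t huv,
        B₁, Finset.mem_of_mem_erase hB₁, B₂, Finset.mem_of_mem_erase hB₂, hBne,
        hlift B₁ hB₁ a haC, hlift B₁ hB₁ u huC, hlift B₂ hB₂ b hbC', hlift B₂ hB₂ v hvC'⟩
    · intro C hC
      obtain ⟨B, hB, rfl⟩ := Finset.mem_image.mp hC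
      have hBP : B ∈ P := Finset.mem_of_mem_erase hB
      rintro (h | h | h)
      · have hsub := Forb_subset h
        have hlow : ∀ x ∈ B, x < c := by
          intro x hx
          have hmem := hsub (Finset.mem_image_of_mem (phi c t) hx)
          simp only [Finset.mem_Ico, zero_add] at hmem
          by_contra hge
          have hx' := hnotIcc B hB x hx
          simp only [Finset.mem_Icc, not_and, not_le] at hx'
          have := hx' (le_of_not_gt hge)
          rw [phi_eq_of_ge (le_of_not_gt hge)] at hmem
          omega
        have heq : B.image (phi c t) = B :=
          image_congr_id' (fun x hx => phi_eq_of_lt (hlow x hx))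
        rw [heq] at h
        exact hforb B hBP (Or.inl h)
      · have hlow : ∀ x ∈ B, x < c := by
          intro x hx
          have hmem := h (Finset.mem_image_of_mem (phi c t) hx)
          simp only [Finset.mem_Ico] at hmem
          by_contra hge
          have hx' := hnotIcc B hB x hx
          simp only [Finset.mem_Icc, not_and, not_le] at hx'
          have := hx' (le_of_not_gt hge)
          rw [phi_eq_of_ge (le_of_not_gt hge)] at hmem
          omega
        have heq : B.image (phi c t) = B :=
          image_congr_id' (fun x hx => phi_eq_of_lt (hlow x hx))
        rw [heq] at h
        refine hforb B hBP (Or.inr (Or.inl (fun x hx => ?_)))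
        have hmem := h hx
        simp only [Finset.mem_Ico] at hmem ⊢
        omega
      · have hsub := Forb_subset h
        have hhigh : ∀ x ∈ B, c + t + 1 ≤ x := by
          intro x hx
          have hmem := hsub (Finset.mem_image_of_mem (phi c t) hx)
          simp only [Finset.mem_Ico] at hmem
          have hx' := hnotIcc B hB x hx
          simp only [Finset.mem_Icc, not_and, not_le] at hx'
          by_contra hlt
          push_neg at hlt
          rcases lt_or_ge x c with h' | h'
          · rw [phi_eq_of_lt h'] at hmem; omega
          · have := hx' h'; omega
        have heq : (B.image (phi c t)).image (· + (t + 1)) = B := by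
          rw [Finset.image_image]
          apply image_congr_id'
          intro x hx
          simp only [Function.comp]
          rw [phi_eq_of_ge (by have := hhigh x hx; omega)]
          have := hhigh x hx
          omega
        have hsh := (Forb_shift l₂ c (t + 1) (B.image (phi c t))).mpr h
        rw [heq] at hsh
        rw [show c + (t + 1) = c + t + 1 by omega] at hsh
        exact hforb B hBP (Or.inr (Or.inr (Or.inr hsh)))
  have hbij : Set.BijOn F (goodSet t (l₁ ++ r :: l₂))
      {P | P ∈ goodSet t (l₁ ++ (r + t) :: 1 :: l₂) ∧
        Finset.Icc (l₁.sum + r) (l₁.sum + r + t) ∈ P} := ⟨hmapsTo, hinj, hsurj⟩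
  rw [← hbij.image_eq]
  exact Set.ncard_image_of_injOn hinj

end NCAux
namespace NCAux

lemma key_ncard (t : ℕ) (ht : 1 ≤ t) (m : ℕ) (hm : t ≤ m) (l₁ l₂ : List ℕ) :
    (goodSet t (l₁ ++ m :: 1 :: l₂)).ncard
      = (goodSet t (l₁ ++ (m + 1) :: l₂)).ncard
        + (goodSet t (l₁ ++ (m - t) :: l₂)).ncard := by
  obtain ⟨r, rfl⟩ : ∃ r, m = r + t := ⟨m - t, by omega⟩
  rw [show r + t - t = r by omega]
  set o := l₁.sum with ho
  set c := o + r with hcdef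
  set Bq : Finset ℕ := Finset.Icc c (c + t) with hBqdef
  set Q : Set (Finset (Finset ℕ)) :=
    {P | P ∈ goodSet t (l₁ ++ (r + t) :: 1 :: l₂) ∧ Bq ∈ P} with hQ
  have e1 : o + (r + t) = c + t := by omega
  have e2 : o + (r + t + 1) = c + t + 1 := by omega
  have hsum12 : (l₁ ++ (r + t) :: 1 :: l₂).sum = (l₁ ++ (r + t + 1) :: l₂).sum := by
    simp [List.sum_append, List.sum_cons]; omega
  -- membership characterizations
  have hforbA : ∀ B : Finset ℕ, Forb (l₁ ++ (r + t) :: 1 :: l₂) 0 B ↔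
      (Forb l₁ 0 B ∨ B ⊆ Finset.Ico o (c + t) ∨ B ⊆ Finset.Ico (c + t) (c + t + 1) ∨
        Forb l₂ (c + t + 1) B) := by
    intro B
    rw [Forb_append]
    simp only [Forb, zero_add, ← ho, e1, or_assoc]
  have hforbB : ∀ B : Finset ℕ, Forb (l₁ ++ (r + t + 1) :: l₂) 0 B ↔
      (Forb l₁ 0 B ∨ B ⊆ Finset.Ico o (c + t + 1) ∨ Forb l₂ (c + t + 1) B) := by
    intro B
    rw [Forb_append]
    simp only [Forb, zero_add, ← ho, e2, or_assoc]
  have hsplit : goodSet t (l₁ ++ (r + t) :: 1 :: l₂)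
      = goodSet t (l₁ ++ (r + t + 1) :: l₂) ∪ Q := by
    ext P
    simp only [hQ, Set.mem_union, Set.mem_setOf_eq]
    constructor
    · intro hP
      by_cases hex : ∃ B ∈ P, B ⊆ Finset.Ico o (c + t + 1)
      · obtain ⟨B, hB, hBsub⟩ := hex
        right
        refine ⟨hP, ?_⟩
        have hno : ∀ B' ∈ P, ¬ B' ⊆ Finset.Ico o (o + (r + t)) := by
          intro B' hB' hsub
          refine hP.2 B' hB' ?_
          rw [hforbA]
          rw [e1] at hsub
          exact Or.inr (Or.inl hsub)
        have hBeq := gap_lemma (t := t) (o := o) (m := r + t) (by omega) hP.1 hno hB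
          (by rw [show o + (r + t) + 1 = c + t + 1 by omega]; exact hBsub)
        have hBqB : Bq = B := by rw [hBeq, hBqdef]; congr 1 <;> omega
        rw [hBqB]; exact hB
      · left
        refine ⟨?_, ?_⟩
        · show IsNCPart t (l₁ ++ (r + t + 1) :: l₂).sum P
          rw [← hsum12]; exact hP.1
        · intro B hB hF
          rw [hforbB] at hF
          rcases hF with h | h | h
          · exact hP.2 B hB ((hforbA B).mpr (Or.inl h))
          · exact hex ⟨B, hB, h⟩
          · exact hP.2 B hB ((hforbA B).mpr (Or.inr (Or.inr (Or.inr h))))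
    · rintro (hP | hP)
      · refine ⟨?_, ?_⟩
        · show IsNCPart t (l₁ ++ (r + t) :: 1 :: l₂).sum P
          rw [hsum12]; exact hP.1
        · intro B hB hF
          rw [hforbA] at hF
          rcases hF with h | h | h | h
          · exact hP.2 B hB ((hforbB B).mpr (Or.inl h))
          · refine hP.2 B hB ((hforbB B).mpr (Or.inr (Or.inl ?_)))
            exact h.trans (Finset.Ico_subset_Ico le_rfl (by omega))
          · have hcard : B.card ≤ 1 := by
              calc B.card ≤ (Finset.Ico (c + t) (c + t + 1)).card := Finset.card_le_card h
              _ = 1 := by rw [Nat.card_Ico]; omega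
            have hc2 := hP.1.2.2.1 B hB
            omega
          · exact hP.2 B hB ((hforbB B).mpr (Or.inr (Or.inr h)))
      · exact hP.1
  have hdisj : Disjoint (goodSet t (l₁ ++ (r + t + 1) :: l₂)) Q := by
    rw [Set.disjoint_left]
    rintro P hP1 ⟨_, hBqP⟩
    refine hP1.2 Bq hBqP ((hforbB Bq).mpr (Or.inr (Or.inl ?_)))
    intro x hx
    have := Finset.mem_Icc.mp hx
    simp only [Finset.mem_Ico]
    omega
  have hfin1 : (goodSet t (l₁ ++ (r + t + 1) :: l₂)).Finite := goodSet_finite t _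
  have hfinQ : Q.Finite :=
    (goodSet_finite t (l₁ ++ (r + t) :: 1 :: l₂)).subset (fun P hP => hP.1)
  rw [hsplit, Set.ncard_union_eq hdisj hfin1 hfinQ]
  congr 1
  exact bij_ncard t ht r l₁ l₂

end NCAux
namespace NCAux

lemma prod_base (t : ℕ) (U : ℕ → Polynomial ℚ) (hinit : ∀ i ≤ t, U i = X ^ i) :
    ∀ l : List ℕ, (∀ x ∈ l, x ≤ t) → (l.map U).prod = X ^ l.sum := by
  intro l
  induction l with
  | nil => intro _; simp
  | cons a l ih =>
    intro h
    rw [List.map_cons, List.prod_cons, List.sum_cons, ih (fun x hx => h x (by simp [hx])),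
      hinit a (h a (by simp)), pow_add]

lemma main_list (t : ℕ) (ht : 1 ≤ t) (U : ℕ → Polynomial ℚ)
    (hinit : ∀ i ≤ t, U i = X ^ i)
    (hrec : ∀ n, t ≤ n → U (n + 1) = X * U n - U (n - t)) :
    ∀ l : List ℕ, Lfun t ((l.map U).prod) = ((goodSet t l).ncard : ℚ) := by
  suffices h : ∀ M : ℕ, ∀ l : List ℕ, (l.map (fun x => x * x)).sum = M →
      Lfun t ((l.map U).prod) = ((goodSet t l).ncard : ℚ) by
    intro l; exact h _ l rfl
  intro M
  induction M using Nat.strong_induction_on with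
  | _ M ih =>
    intro l hμ
    by_cases hall : ∀ x ∈ l, x ≤ t
    · rw [prod_base t U hinit l hall, Lfun_X_pow, goodSet_base t l hall]
      rfl
    · push_neg at hall
      obtain ⟨x, hxl, hxt⟩ := hall
      obtain ⟨m, rfl⟩ : ∃ m, x = m + 1 := ⟨x - 1, by omega⟩
      have hmt : t ≤ m := by omega
      obtain ⟨l₁, l₂, rfl⟩ := List.append_of_mem hxl
      -- polynomial identity
      have hU : U (m + 1) = U 1 * U m - U (m - t) := by
        rw [hrec m hmt, hinit 1 ht, pow_one]
      have hprod : ((l₁ ++ (m + 1) :: l₂).map U).prod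
          = ((l₁ ++ m :: 1 :: l₂).map U).prod - ((l₁ ++ (m - t) :: l₂).map U).prod := by
        simp only [List.map_append, List.prod_append, List.map_cons, List.prod_cons, hU]
        ring
      have hμ1 : ((l₁ ++ m :: 1 :: l₂).map (fun x => x * x)).sum < M := by
        subst hμ
        simp only [List.map_append, List.sum_append, List.map_cons, List.sum_cons]
        nlinarith [List.sum_nonneg (l := (l₂.map (fun x => x * x)))
          (fun y _ => Nat.zero_le y)]
      have hμ2 : ((l₁ ++ (m - t) :: l₂).map (fun x => x * x)).sum < M := by
        subst hμ
        simp only [List.map_append, List.sum_append, List.map_cons, List.sum_cons]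
        have : (m - t) * (m - t) < (m + 1) * (m + 1) := by
          apply Nat.mul_lt_mul_of_lt_of_le <;> omega
        omega
      rw [hprod, Lfun_sub, ih _ hμ1 _ rfl, ih _ hμ2 _ rfl,
        key_ncard t ht m hmt l₁ l₂]
      push_cast
      ring

end NCAux

namespace NCAux

lemma sum_map_range (n : ℕ → ℕ) (k : ℕ) :
    ((List.range k).map n).sum = ∑ j ∈ Finset.range k, n j := rfl

lemma take_sum (n : ℕ → ℕ) {k i : ℕ} (h : i ≤ k) :
    (((List.range k).map n).take i).sum = offset n i := by
  rw [← List.map_take, List.take_range, Nat.min_eq_left h]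
  rfl

lemma getD_map_range (n : ℕ → ℕ) {k i : ℕ} (h : i < k) :
    ((List.range k).map n).getD i 0 = n i := by
  rw [List.getD_eq_getElem _ _ (by simpa using h)]
  simp

end NCAux

theorem chebyshev2_higher_order_integral (t : ℕ) (ht : 1 ≤ t)
    (U : ℕ → Polynomial ℚ)
    (hinit : ∀ i ≤ t, U i = X ^ i)
    (hrec : ∀ n, t ≤ n → U (n + 1) = X * U n - U (n - t))
    (k : ℕ) (n : ℕ → ℕ) :
    Lfun t (∏ i ∈ Finset.range k, U (n i)) =
      ({P : Finset (Finset ℕ) |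
          IsNCPart t (∑ j ∈ Finset.range k, n j) P ∧
          ∀ B ∈ P, ¬ ∃ i < k, B ⊆ Finset.Ico (offset n i) (offset n i + n i)}.ncard : ℚ) := by
  have hmain := NCAux.main_list t ht U hinit hrec ((List.range k).map n)
  rw [show (∏ i ∈ Finset.range k, U (n i)) = (((List.range k).map n).map U).prod by
    rw [List.map_map]; rfl]
  rw [hmain]
  congr 2
  ext P
  simp only [NCAux.goodSet, Set.mem_setOf_eq, NCAux.sum_map_range]
  constructor
  · rintro ⟨h1, h2⟩
    refine ⟨h1, fun B hB ⟨i, hik, hsub⟩ => h2 B hB ?_⟩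
    rw [NCAux.Forb_iff_exists]
    refine ⟨i, by simpa using hik, ?_⟩
    rw [zero_add, NCAux.take_sum n (le_of_lt hik), NCAux.getD_map_range n hik]
    exact hsub
  · rintro ⟨h1, h2⟩
    refine ⟨h1, fun B hB hF => ?_⟩
    rw [NCAux.Forb_iff_exists] at hF
    obtain ⟨i, hi, hsub⟩ := hF
    have hik : i < k := by simpa using hi
    refine h2 B hB ⟨i, hik, ?_⟩
    rw [zero_add, NCAux.take_sum n (le_of_lt hik), NCAux.getD_map_range n hik] at hsub
    exact hsub
end

section
/- The higher-order Fibonacci numbers, defined as the total number of coverings of an n-vertex path by t-edge paths and fixed points, satisfy {}^tF_n = w^{-n} U^{(t)}_n(w) for any complex number w with w^{t+1} = -1. -/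
open Polynomial

/-- The higher-order Fibonacci numbers `ᵗFₙ` (the number of coverings of an
`n`-vertex path by `t`-edge paths and fixed points) are obtained from the
higher-order Chebyshev polynomials of the second kind by evaluating at any
`(t+1)`st root of `-1` and dividing by `wⁿ`. -/
theorem higher_order_fibonacci_from_chebyshev (t : ℕ) (ht : 1 ≤ t)
    (F : ℕ → ℕ)
    (hFinit : ∀ i ≤ t, F i = 1)
    (hFrec : ∀ n, t ≤ n → F (n + 1) = F n + F (n - t))
    (U : ℕ → Polynomial ℂ)
    (hUinit : ∀ i ≤ t, U i = X ^ i)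
    (hUrec : ∀ n, t ≤ n → U (n + 1) = X * U n - U (n - t))
    (w : ℂ) (hw : w ^ (t + 1) = -1) :
    ∀ n : ℕ, (F n : ℂ) = (U n).eval w / w ^ n := by
  have hw0 : w ≠ 0 := by
    intro h; subst h; simp at hw
  have key : ∀ n : ℕ, (U n).eval w = (F n : ℂ) * w ^ n := by
    intro n
    induction n using Nat.strong_induction_on with
    | _ n ih =>
      rcases le_or_gt n t with hn | hn
      · rw [hUinit n hn, hFinit n hn, eval_pow, eval_X, Nat.cast_one, one_mul]
      · obtain ⟨m, rfl⟩ : ∃ m, n = m + 1 := ⟨n - 1, (Nat.succ_pred_eq_of_pos (by omega)).symm⟩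
        have htm : t ≤ m := by omega
        have h1 := ih m (by omega)
        have h2 := ih (m - t) (by omega)
        have hpow : w ^ (m - t) = -(w ^ (m + 1)) := by
          have : w ^ (m + 1) = w ^ (m - t) * w ^ (t + 1) := by
            rw [← pow_add]; congr 1; omega
          rw [this, hw]; ring
        rw [hUrec m htm, eval_sub, eval_mul, eval_X, h1, h2, hFrec m htm, hpow]
        push_cast
        ring
  intro n
  rw [key n, mul_div_assoc, div_self (pow_ne_zero n hw0), mul_one]
end

section
/- The higher-order matching polynomials T^{(t)}_n(x) of the n-cycle, counting coverings by t-edge paths (weight -1) and fixed points (weight x), satisfy the recurrence T^{(t)}_{n+1}(x) = x T^{(t)}_n(x) - T^{(t)}_{n-t}(x) for n > t, with T^{(t)}_i(x) = x^i for 0 <= i <= t and T^{(t)}_{t+1}(x) = x^{t+1} - (t+1). -/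
open Polynomial
open scoped Classical

/-- The cyclic interval of `t+1` consecutive vertices of the `n`-cycle starting
at vertex `s`. -/
def cycInterval (n t s : ℕ) : Finset ℕ :=
  (Finset.range (t + 1)).image fun j => (s + j) % n

lemma mem_cycInterval {n t s : ℕ} (hn : t < n) (hs : s < n) {x : ℕ} :
    x ∈ cycInterval n t s ↔ ((s ≤ x ∧ x ≤ s + t ∧ x < n) ∨ x + n ≤ s + t) := by
  simp only [cycInterval, Finset.mem_image, Finset.mem_range]
  constructor
  · rintro ⟨j, hj, rfl⟩
    rcases lt_or_ge (s + j) n with h | h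
    · rw [Nat.mod_eq_of_lt h]; omega
    · rw [Nat.mod_eq_sub_mod h, Nat.mod_eq_of_lt (by omega)]; omega
  · rintro (⟨h1, h2, h3⟩ | h)
    · exact ⟨x - s, by omega, by rw [Nat.mod_eq_of_lt (by omega)]; omega⟩
    · refine ⟨x + n - s, by omega, ?_⟩
      have : s + (x + n - s) = x + n := by omega
      rw [this, Nat.add_mod_right, Nat.mod_eq_of_lt (by omega)]

lemma card_cycInterval {n t s : ℕ} (hn : t < n) (hs : s < n) :
    (cycInterval n t s).card = t + 1 := by
  have hinj : Set.InjOn (fun j => (s + j) % n) (Finset.range (t+1)) := by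
    intro a ha b hb hab
    simp only [Finset.coe_range, Set.mem_Iio] at ha hb
    have h1 : (s + a) % n = if s + a < n then s + a else s + a - n := by
      split
      · rw [Nat.mod_eq_of_lt]; assumption
      · rw [Nat.mod_eq_sub_mod (by omega), Nat.mod_eq_of_lt (by omega)]
    have h2 : (s + b) % n = if s + b < n then s + b else s + b - n := by
      split
      · rw [Nat.mod_eq_of_lt]; assumption
      · rw [Nat.mod_eq_sub_mod (by omega), Nat.mod_eq_of_lt (by omega)]
    simp only [h1, h2] at hab
    split_ifs at hab <;> omega
  rw [cycInterval, Finset.card_image_of_injOn hinj, Finset.card_range]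

noncomputable def pathCoverings (t n : ℕ) : Finset (Finset ℕ) :=
  (Finset.range n).powerset.filter fun S =>
    ∀ s ∈ S, s + t < n ∧ ∀ s' ∈ S, s ≠ s' → s + t < s' ∨ s' + t < s

noncomputable def U (t n : ℕ) : Polynomial ℤ :=
  ∑ S ∈ pathCoverings t n, (-1 : Polynomial ℤ) ^ S.card * X ^ (n - (t + 1) * S.card)

lemma mem_pathCoverings {t n : ℕ} {S : Finset ℕ} :
    S ∈ pathCoverings t n ↔ (S ⊆ Finset.range n ∧
      ∀ s ∈ S, s + t < n ∧ ∀ s' ∈ S, s ≠ s' → s + t < s' ∨ s' + t < s) := by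
  simp [pathCoverings]

lemma pathCoverings_small {t n : ℕ} (h : n ≤ t) : pathCoverings t n = {∅} := by
  ext S
  simp only [mem_pathCoverings, Finset.mem_singleton]
  constructor
  · rintro ⟨h1, h2⟩
    by_contra hne
    obtain ⟨s, hs⟩ := Finset.nonempty_iff_ne_empty.2 hne
    have := (h2 s hs).1
    omega
  · rintro rfl
    simp

lemma U_small {t n : ℕ} (h : n ≤ t) : U t n = X ^ n := by
  rw [U, pathCoverings_small h]
  simp

lemma path_card_bound {t n : ℕ} {S : Finset ℕ} (hS : S ∈ pathCoverings t n) :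
    (t + 1) * S.card ≤ n := by
  rw [mem_pathCoverings] at hS
  have hdisj : ∀ s ∈ S, ∀ s' ∈ S, s ≠ s' →
      Disjoint (Finset.Icc s (s + t)) (Finset.Icc s' (s' + t)) := by
    intro s hs s' hs' hne
    have := (hS.2 s hs).2 s' hs' hne
    rw [Finset.disjoint_left]
    intro x hx hx'
    simp only [Finset.mem_Icc] at hx hx'
    omega
  have hcard : (S.biUnion fun s => Finset.Icc s (s + t)).card = (t + 1) * S.card := by
    rw [Finset.card_biUnion hdisj]
    simp only [Nat.card_Icc]
    have he : ∀ x ∈ S, x + t + 1 - x = t + 1 := fun x _ => by omega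
    rw [Finset.sum_congr rfl he, Finset.sum_const, smul_eq_mul, mul_comm]
  have hsub : (S.biUnion fun s => Finset.Icc s (s + t)) ⊆ Finset.range n := by
    intro x hx
    simp only [Finset.mem_biUnion, Finset.mem_Icc] at hx
    obtain ⟨s, hs, h1, h2⟩ := hx
    have := (hS.2 s hs).1
    simp only [Finset.mem_range]
    omega
  calc (t + 1) * S.card = _ := hcard.symm
    _ ≤ (Finset.range n).card := Finset.card_le_card hsub
    _ = n := Finset.card_range n

lemma filter_notMem_pc {t n : ℕ} :
    (pathCoverings t (n + t + 1)).filter (fun S => n ∉ S) = pathCoverings t (n + t) := by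
  ext S
  simp only [Finset.mem_filter, mem_pathCoverings]
  constructor
  · rintro ⟨⟨h1, h2⟩, h3⟩
    refine ⟨fun x hx => ?_, fun s hs => ⟨?_, (h2 s hs).2⟩⟩
    · have := (h2 x hx).1
      have hx' : x ≠ n := fun he => h3 (he ▸ hx)
      simp only [Finset.mem_range]
      omega
    · have := (h2 s hs).1
      have : s ≠ n := fun he => h3 (he ▸ hs)
      have := (h2 s hs).1
      omega
  · rintro ⟨h1, h2⟩
    refine ⟨⟨fun x hx => ?_, fun s hs => ⟨by have := (h2 s hs).1; omega, (h2 s hs).2⟩⟩,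
      fun hn => by have := (h2 n hn).1; omega⟩
    have := h1 hx
    simp only [Finset.mem_range] at this ⊢
    omega

lemma U_rec (t n : ℕ) : U t (n + t + 1) = X * U t (n + t) - U t n := by
  have key := Finset.sum_filter_add_sum_filter_not (pathCoverings t (n + t + 1))
    (fun S => n ∉ S)
    (fun S => (-1 : Polynomial ℤ) ^ S.card * X ^ ((n + t + 1) - (t + 1) * S.card))
  rw [U, ← key, filter_notMem_pc]
  have hA : ∑ S ∈ pathCoverings t (n + t),
      (-1 : Polynomial ℤ) ^ S.card * X ^ ((n + t + 1) - (t + 1) * S.card)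
      = X * U t (n + t) := by
    rw [U, Finset.mul_sum]
    refine Finset.sum_congr rfl fun S hS => ?_
    have hb := path_card_bound hS
    rw [show (n + t + 1) - (t + 1) * S.card = ((n + t) - (t + 1) * S.card) + 1 from by omega,
      pow_succ]
    ring
  have hB : ∑ S ∈ (pathCoverings t (n + t + 1)).filter (fun S => ¬ n ∉ S),
      (-1 : Polynomial ℤ) ^ S.card * X ^ ((n + t + 1) - (t + 1) * S.card)
      = - U t n := by
    rw [U, ← Finset.sum_neg_distrib]
    refine Finset.sum_bij' (i := fun S _ => S.erase n) (j := fun S _ => insert n S)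
      ?_ ?_ ?_ ?_ ?_
    · intro S hS
      simp only [Finset.mem_filter, mem_pathCoverings, not_not] at hS
      obtain ⟨⟨h1, h2⟩, h3⟩ := hS
      rw [mem_pathCoverings]
      constructor
      · intro x hx
        have hx' := Finset.mem_of_mem_erase hx
        have hxn := Finset.ne_of_mem_erase hx
        have := (h2 x hx').2 n h3 hxn
        have := (h2 x hx').1
        simp only [Finset.mem_range]
        omega
      · intro s hs
        have hs' := Finset.mem_of_mem_erase hs
        have hsn := Finset.ne_of_mem_erase hs
        have := (h2 s hs').2 n h3 hsn
        have := (h2 s hs').1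
        exact ⟨by omega, fun s' hs'' hne => (h2 s hs').2 s' (Finset.mem_of_mem_erase hs'') hne⟩
    · intro S hS
      rw [mem_pathCoverings] at hS
      obtain ⟨h1, h2⟩ := hS
      simp only [Finset.mem_filter, mem_pathCoverings, not_not]
      refine ⟨⟨?_, ?_⟩, Finset.mem_insert_self n S⟩
      · intro x hx
        rcases Finset.mem_insert.1 hx with rfl | hx'
        · simp only [Finset.mem_range]; omega
        · have := h1 hx'
          simp only [Finset.mem_range] at this ⊢
          omega
      · intro s hs
        rcases Finset.mem_insert.1 hs with rfl | hs'
        · refine ⟨by omega, fun s' hs'' hne => ?_⟩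
          rcases Finset.mem_insert.1 hs'' with rfl | h
          · omega
          · have := (h2 s' h).1; omega
        · refine ⟨by have := (h2 s hs').1; omega, fun s' hs'' hne => ?_⟩
          rcases Finset.mem_insert.1 hs'' with rfl | h
          · have := (h2 s hs').1; omega
          · exact (h2 s hs').2 s' h hne
    · intro S hS
      simp only [Finset.mem_filter, not_not] at hS
      exact Finset.insert_erase hS.2
    · intro S hS
      rw [mem_pathCoverings] at hS
      have : n ∉ S := fun h => by have := (hS.2 n h).1; omega
      exact Finset.erase_insert this
    · intro S hS
      simp only [Finset.mem_filter, not_not] at hS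
      have hn : n ∈ S := hS.2
      have hcard : (S.erase n).card + 1 = S.card := Finset.card_erase_add_one hn
      rw [← hcard, pow_succ]
      rw [show (n + t + 1) - (t + 1) * ((S.erase n).card + 1)
          = n - (t + 1) * (S.erase n).card from by ring_nf; omega]
      ring
  rw [hA, hB]
  ring

/-- Coverings of the cycle on `n` vertices (labeled `0,…,n-1`) by vertex-disjoint
paths with `t` edges, encoded by the set of starting vertices of the `t`-paths.
(The requirement `(cycInterval n t s).card = t+1` says the `t+1` cyclically
consecutive vertices starting from `s` really are distinct.) -/
noncomputable def cycCoverings (t n : ℕ) : Finset (Finset ℕ) :=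
  (Finset.range n).powerset.filter fun S =>
    (∀ s ∈ S, (cycInterval n t s).card = t + 1) ∧
    ∀ s ∈ S, ∀ s' ∈ S, s ≠ s' → Disjoint (cycInterval n t s) (cycInterval n t s')

/-- The higher-order matching polynomial of the `n`-cycle: each `t`-path gets
weight `-1` and each uncovered vertex weight `x`. -/
noncomputable def Tcomb (t n : ℕ) : Polynomial ℤ :=
  ∑ S ∈ cycCoverings t n, (-1 : Polynomial ℤ) ^ S.card * X ^ (n - (t + 1) * S.card)

lemma mem_cycCoverings {t n : ℕ} {S : Finset ℕ} :
    S ∈ cycCoverings t n ↔ (S ⊆ Finset.range n ∧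
      (∀ s ∈ S, (cycInterval n t s).card = t + 1) ∧
      ∀ s ∈ S, ∀ s' ∈ S, s ≠ s' → Disjoint (cycInterval n t s) (cycInterval n t s')) := by
  simp [cycCoverings]

lemma disj_iff {t n s s' : ℕ} (hn : t < n) (hs : s < n) (hs' : s' < n)
    (h1 : s + t < n) (h2 : s' + t < n) :
    Disjoint (cycInterval n t s) (cycInterval n t s') ↔ (s + t < s' ∨ s' + t < s) := by
  rw [Finset.disjoint_left]
  constructor
  · intro h
    by_contra hc
    push_neg at hc
    rcases le_total s s' with hle | hle
    · exact h ((mem_cycInterval (x := s') hn hs).2 (Or.inl ⟨by omega, by omega, by omega⟩))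
        ((mem_cycInterval hn hs').2 (Or.inl ⟨by omega, by omega, by omega⟩))
    · exact h ((mem_cycInterval (x := s) hn hs).2 (Or.inl ⟨by omega, by omega, by omega⟩))
        ((mem_cycInterval hn hs').2 (Or.inl ⟨by omega, by omega, by omega⟩))
  · intro h x hx hx'
    rw [mem_cycInterval hn hs] at hx
    rw [mem_cycInterval hn hs'] at hx'
    omega

lemma cycCoverings_small {t n : ℕ} (h : n ≤ t) : cycCoverings t n = {∅} := by
  ext S
  simp only [mem_cycCoverings, Finset.mem_singleton]
  constructor
  · rintro ⟨h1, h2, h3⟩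
    by_contra hne
    obtain ⟨s, hs⟩ := Finset.nonempty_iff_ne_empty.2 hne
    have hcard := h2 s hs
    have hsn := Finset.mem_range.1 (h1 hs)
    have hn : 0 < n := by omega
    have hsub : cycInterval n t s ⊆ Finset.range n := by
      intro x hx
      simp only [cycInterval, Finset.mem_image] at hx
      obtain ⟨j, _, rfl⟩ := hx
      exact Finset.mem_range.2 (Nat.mod_lt _ hn)
    have := Finset.card_le_card hsub
    rw [hcard, Finset.card_range] at this
    omega
  · rintro rfl
    simp

lemma Tcomb_small {t n : ℕ} (h : n ≤ t) : Tcomb t n = X ^ n := by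
  rw [Tcomb, cycCoverings_small h]
  simp

lemma filterA {t m : ℕ} :
    (cycCoverings t (m + t + 1)).filter (fun S => ∀ s ∈ S, s < m)
      = pathCoverings t (m + t) := by
  have hn : t < m + t + 1 := by omega
  ext S
  simp only [Finset.mem_filter, mem_cycCoverings, mem_pathCoverings]
  constructor
  · rintro ⟨⟨h1, h2, h3⟩, h4⟩
    refine ⟨fun x hx => Finset.mem_range.2 (by have := h4 x hx; omega),
      fun s hs => ⟨by have := h4 s hs; omega, fun s' hs' hne => ?_⟩⟩
    have hsm := h4 s hs
    have hs'm := h4 s' hs'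
    have := h3 s hs s' hs' hne
    rw [disj_iff hn (by omega) (by omega) (by omega) (by omega)] at this
    exact this
  · rintro ⟨h1, h2⟩
    have hlt : ∀ s ∈ S, s < m := fun s hs => by have := (h2 s hs).1; omega
    refine ⟨⟨fun x hx => Finset.mem_range.2 (by have := hlt x hx; omega),
      fun s hs => card_cycInterval hn (by have := hlt s hs; omega),
      fun s hs s' hs' hne => ?_⟩, hlt⟩
    rw [disj_iff hn (by have := hlt s hs; omega) (by have := hlt s' hs'; omega)
      (by have := hlt s hs; omega) (by have := hlt s' hs'; omega)]
    exact (h2 s hs).2 s' hs' hne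

lemma aux_mem {t m j : ℕ} (hj : j ≤ t) {S : Finset ℕ}
    (hS : S ∈ cycCoverings t (m + t + 1)) (h0 : m + j ∈ S)
    {s : ℕ} (hs : s ∈ S) (hne : s ≠ m + j) : j ≤ s ∧ s + t < m + j := by
  have hn : t < m + t + 1 := by omega
  rw [mem_cycCoverings] at hS
  obtain ⟨h1, h2, h3⟩ := hS
  have hsr : s < m + t + 1 := Finset.mem_range.1 (h1 hs)
  have hd := Finset.disjoint_left.1 (h3 s hs (m + j) h0 hne)
  have hsm : s < m := by
    by_contra hc
    exact hd ((mem_cycInterval (x := m + t) hn (by omega)).2 (Or.inl ⟨by omega, by omega, by omega⟩))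
      ((mem_cycInterval hn (by omega)).2 (Or.inl ⟨by omega, by omega, by omega⟩))
  constructor
  · by_contra hc
    exact hd ((mem_cycInterval (x := s) hn (by omega)).2 (Or.inl ⟨by omega, by omega, by omega⟩))
      ((mem_cycInterval hn (by omega)).2 (Or.inr (by omega)))
  · by_contra hc
    exact hd ((mem_cycInterval (x := m + j) hn (by omega)).2 (Or.inl ⟨by omega, by omega, by omega⟩))
      ((mem_cycInterval hn (by omega)).2 (Or.inl ⟨by omega, by omega, by omega⟩))

lemma filterB {t m : ℕ} :
    (cycCoverings t (m + t + 1)).filter (fun S => ¬ ∀ s ∈ S, s < m)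
      = (Finset.range (t + 1)).biUnion
          (fun j => (cycCoverings t (m + t + 1)).filter (fun S => m + j ∈ S)) := by
  ext S
  simp only [Finset.mem_filter, Finset.mem_biUnion, Finset.mem_range]
  constructor
  · rintro ⟨hc, hnot⟩
    push_neg at hnot
    obtain ⟨s, hs, hms⟩ := hnot
    have : s < m + t + 1 := Finset.mem_range.1 ((mem_cycCoverings.1 hc).1 hs)
    exact ⟨s - m, by omega, hc, by rwa [show m + (s - m) = s from by omega]⟩
  · rintro ⟨j, hj, hc, hmem⟩
    exact ⟨hc, fun hall => by have := hall _ hmem; omega⟩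

lemma fibers_disjoint {t m : ℕ} :
    Set.PairwiseDisjoint ↑(Finset.range (t + 1))
      (fun j => (cycCoverings t (m + t + 1)).filter (fun S => m + j ∈ S)) := by
  intro j hj j' hj' hne
  simp only [Finset.coe_range, Set.mem_Iio] at hj hj'
  rw [Function.onFun, Finset.disjoint_left]
  intro S hS hS'
  simp only [Finset.mem_filter] at hS hS'
  obtain ⟨hc, hmem⟩ := hS
  have hmem' := hS'.2
  have hn : t < m + t + 1 := by omega
  have hd := Finset.disjoint_left.1
    ((mem_cycCoverings.1 hc).2.2 (m + j) hmem (m + j') hmem' (by omega))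
  exact hd ((mem_cycInterval (x := m + t) hn (by omega)).2 (Or.inl ⟨by omega, by omega, by omega⟩))
    ((mem_cycInterval hn (by omega)).2 (Or.inl ⟨by omega, by omega, by omega⟩))

lemma sumA (t m : ℕ) :
    ∑ S ∈ pathCoverings t (m + t),
      (-1 : Polynomial ℤ) ^ S.card * X ^ ((m + t + 1) - (t + 1) * S.card)
      = X * U t (m + t) := by
  rw [U, Finset.mul_sum]
  refine Finset.sum_congr rfl fun S hS => ?_
  have hb := path_card_bound hS
  rw [show (m + t + 1) - (t + 1) * S.card = ((m + t) - (t + 1) * S.card) + 1 from by omega,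
    pow_succ]
  ring

lemma sumB {t m j : ℕ} (hj : j ≤ t) :
    ∑ S ∈ (cycCoverings t (m + t + 1)).filter (fun S => m + j ∈ S),
      (-1 : Polynomial ℤ) ^ S.card * X ^ ((m + t + 1) - (t + 1) * S.card)
      = - U t m := by
  have hn : t < m + t + 1 := by omega
  rw [U, ← Finset.sum_neg_distrib]
  refine Finset.sum_bij' (i := fun S _ => (S.erase (m + j)).image (· - j))
    (j := fun S' _ => insert (m + j) (S'.image (· + j))) ?_ ?_ ?_ ?_ ?_
  · -- maps into pathCoverings t m
    intro S hS
    simp only [Finset.mem_filter] at hS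
    obtain ⟨hc, hmem⟩ := hS
    rw [mem_pathCoverings]
    have key : ∀ s ∈ S.erase (m + j), j ≤ s ∧ s + t < m + j := fun s hs =>
      aux_mem hj hc hmem (Finset.mem_of_mem_erase hs) (Finset.ne_of_mem_erase hs)
    constructor
    · intro x hx
      obtain ⟨a, ha, rfl⟩ := Finset.mem_image.1 hx
      have := key a ha
      exact Finset.mem_range.2 (by omega)
    · intro x hx
      obtain ⟨a, ha, rfl⟩ := Finset.mem_image.1 hx
      have hka := key a ha
      refine ⟨by omega, fun x' hx' hne => ?_⟩
      obtain ⟨b, hb, rfl⟩ := Finset.mem_image.1 hx'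
      have hkb := key b hb
      have hab : a ≠ b := fun h => hne (by rw [h])
      have hdisj := (mem_cycCoverings.1 hc).2.2 a (Finset.mem_of_mem_erase ha)
        b (Finset.mem_of_mem_erase hb) hab
      rw [disj_iff hn (by omega) (by omega) (by omega) (by omega)] at hdisj
      omega
  · -- maps back into filter
    intro S' hS'
    rw [mem_pathCoverings] at hS'
    obtain ⟨h1, h2⟩ := hS'
    have hlt : ∀ b ∈ S', b + t < m := fun b hb => (h2 b hb).1
    have hd0 : ∀ b ∈ S', Disjoint (cycInterval (m + t + 1) t (m + j))
        (cycInterval (m + t + 1) t (b + j)) := by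
      intro b hb
      have hbm := hlt b hb
      rw [Finset.disjoint_left]
      intro x hx hx'
      rw [mem_cycInterval hn (by omega)] at hx
      rw [mem_cycInterval hn (by omega)] at hx'
      omega
    simp only [Finset.mem_filter]
    refine ⟨mem_cycCoverings.2 ⟨?_, ?_, ?_⟩, Finset.mem_insert_self _ _⟩
    · intro x hx
      rcases Finset.mem_insert.1 hx with rfl | hx'
      · exact Finset.mem_range.2 (by omega)
      · obtain ⟨b, hb, rfl⟩ := Finset.mem_image.1 hx'
        have := hlt b hb
        exact Finset.mem_range.2 (by omega)
    · intro s hs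
      rcases Finset.mem_insert.1 hs with rfl | hs'
      · exact card_cycInterval hn (by omega)
      · obtain ⟨b, hb, rfl⟩ := Finset.mem_image.1 hs'
        have := hlt b hb
        exact card_cycInterval hn (by omega)
    · intro s hs s' hs' hne
      rcases Finset.mem_insert.1 hs with rfl | hs1
      · rcases Finset.mem_insert.1 hs' with rfl | hs2
        · omega
        · obtain ⟨b, hb, rfl⟩ := Finset.mem_image.1 hs2
          exact hd0 b hb
      · obtain ⟨a, ha, rfl⟩ := Finset.mem_image.1 hs1
        rcases Finset.mem_insert.1 hs' with rfl | hs2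
        · exact (hd0 a ha).symm
        · obtain ⟨b, hb, rfl⟩ := Finset.mem_image.1 hs2
          have h1 := hlt a ha
          have h2 := hlt b hb
          have hab : a ≠ b := fun h => hne (by rw [h])
          rw [disj_iff hn (by omega) (by omega) (by omega) (by omega)]
          have := (mem_pathCoverings.1 (by rw [mem_pathCoverings]; exact ⟨by assumption, by assumption⟩ : S' ∈ pathCoverings t m)).2
          have := ((mem_pathCoverings.1 (mem_pathCoverings.2 ⟨‹_›, ‹_›⟩)).2 a ha).2 b hb hab
          omega
  · -- left inverse
    intro S hS
    simp only [Finset.mem_filter] at hS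
    obtain ⟨hc, hmem⟩ := hS
    have key : ∀ s ∈ S.erase (m + j), j ≤ s := fun s hs =>
      (aux_mem hj hc hmem (Finset.mem_of_mem_erase hs) (Finset.ne_of_mem_erase hs)).1
    show insert (m + j) (((S.erase (m + j)).image (· - j)).image (· + j)) = S
    rw [Finset.image_image]
    have : ((S.erase (m + j)).image fun s => s - j + j) = S.erase (m + j) := by
      rw [show (fun s => s - j + j) = ((· + j) ∘ (· - j)) from rfl] at *
      apply Finset.image_congr (g := id) (fun s hs => by
        simp only [Function.comp, id]
        have := key s hs
        omega) |>.trans (Finset.image_id)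
    rw [show ((· + j) ∘ (· - j)) = (fun s => s - j + j) from rfl, this,
      Finset.insert_erase hmem]
  · -- right inverse
    intro S' hS'
    rw [mem_pathCoverings] at hS'
    have hnotmem : (m + j) ∉ S'.image (· + j) := by
      intro h
      obtain ⟨b, hb, hbe⟩ := Finset.mem_image.1 h
      have := (hS'.2 b hb).1
      omega
    show ((insert (m + j) (S'.image (· + j))).erase (m + j)).image (· - j) = S'
    rw [Finset.erase_insert hnotmem, Finset.image_image]
    have : ((· - j) ∘ (· + j)) = (id : ℕ → ℕ) := by
      funext x; simp [Function.comp]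
    rw [this, Finset.image_id]
  · -- weights
    intro S hS
    simp only [Finset.mem_filter] at hS
    obtain ⟨hc, hmem⟩ := hS
    have key : ∀ s ∈ S.erase (m + j), j ≤ s := fun s hs =>
      (aux_mem hj hc hmem (Finset.mem_of_mem_erase hs) (Finset.ne_of_mem_erase hs)).1
    have hinj : Set.InjOn (· - j) (S.erase (m + j)) := by
      intro a ha b hb hab
      have h1 := key a ha
      have h2 := key b hb
      have hab' : a - j = b - j := hab
      omega
    have hpos : 1 ≤ S.card := Finset.card_pos.2 ⟨m + j, hmem⟩
    obtain ⟨k, hk⟩ : ∃ k, S.card = k + 1 := ⟨S.card - 1, by omega⟩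
    have hcard : ((S.erase (m + j)).image (· - j)).card = k := by
      rw [Finset.card_image_of_injOn hinj, Finset.card_erase_of_mem hmem]; omega
    have he : (m + t + 1) - (t + 1) * (k + 1) = m - (t + 1) * k := by
      have : (t + 1) * (k + 1) = (t + 1) * k + (t + 1) := by ring
      omega
    rw [hcard, hk, he, pow_succ]
    ring

lemma T_eq (t m : ℕ) :
    Tcomb t (m + t + 1) = X * U t (m + t) - (((t : ℕ) + 1 : ℕ) : Polynomial ℤ) * U t m := by
  have key := Finset.sum_filter_add_sum_filter_not (cycCoverings t (m + t + 1))
    (fun S => ∀ s ∈ S, s < m)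
    (fun S => (-1 : Polynomial ℤ) ^ S.card * X ^ ((m + t + 1) - (t + 1) * S.card))
  rw [Tcomb, ← key, filterA, sumA, filterB, Finset.sum_biUnion fibers_disjoint]
  rw [Finset.sum_congr rfl (fun j hj => sumB (Finset.mem_range.1 hj |> Nat.lt_succ_iff.1))]
  rw [Finset.sum_const, Finset.card_range, nsmul_eq_mul]
  push_cast
  ring

theorem chebyshev1_higher_order_recurrence (t : ℕ) (ht : 1 ≤ t) :
    (∀ i ≤ t, Tcomb t i = X ^ i) ∧
    (Tcomb t (t + 1) = X ^ (t + 1) - ((t : Polynomial ℤ) + 1)) ∧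
    (∀ n, t < n → Tcomb t (n + 1) = X * Tcomb t n - Tcomb t (n - t)) := by
  refine ⟨fun i hi => Tcomb_small hi, ?_, ?_⟩
  · have h0 := T_eq t 0
    simp only [Nat.zero_add, zero_add] at h0
    rw [h0, U_small (le_refl t), U_small (Nat.zero_le t)]
    push_cast
    rw [pow_succ]
    ring
  · intro n hn
    obtain ⟨m, hm, rfl⟩ : ∃ m, 1 ≤ m ∧ n = m + t := ⟨n - t, by omega, by omega⟩
    have hsub : m + t - t = m := by omega
    rw [hsub]
    have h1 : Tcomb t (m + t + 1) = X * U t (m + t) - ((t : Polynomial ℤ) + 1) * U t m := by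
      rw [T_eq]; push_cast; ring
    have h2 : Tcomb t (m + t) = X * U t (m - 1 + t) - ((t : Polynomial ℤ) + 1) * U t (m - 1) := by
      have h := T_eq t (m - 1)
      rw [show m - 1 + t + 1 = m + t from by omega] at h
      rw [h]; push_cast; ring
    have hU : U t (m + t) = X * U t (m - 1 + t) - U t (m - 1) := by
      have h := U_rec t (m - 1)
      rw [show m - 1 + t + 1 = m + t from by omega] at h
      exact h
    rcases le_or_gt m t with hmt | hmt
    · obtain ⟨q, rfl⟩ : ∃ q, m = q + 1 := ⟨m - 1, by omega⟩
      simp only [Nat.add_sub_cancel] at h2 hU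
      rw [h1, h2, hU, Tcomb_small hmt, U_small hmt, U_small (by omega : q ≤ t), pow_succ]
      ring
    · obtain ⟨p, rfl⟩ : ∃ p, m = p + t + 1 := ⟨m - t - 1, by omega⟩
      have h3 : Tcomb t (p + t + 1) = X * U t (p + t) - ((t : Polynomial ℤ) + 1) * U t p := by
        rw [T_eq]; push_cast; ring
      have hU2 : U t (p + t + 1) = X * U t (p + t) - U t p := U_rec t p
      have hm1 : p + t + 1 - 1 = p + t := by omega
      rw [h1, h2, h3, hU, hU2, hm1]
      ring
end

section
/- T^{(t)}_n(x) = x U^{(t)}_{n-1}(x) - (t+1) U^{(t)}_{n-(t+1)}(x) for all n >= 1, where polynomials with negative indices are interpreted as zero. -/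
open Polynomial

theorem chebyshev1_in_terms_of_chebyshev2 (t : ℕ) (ht : 1 ≤ t)
    (U T : ℕ → Polynomial ℚ)
    (hUinit : ∀ i ≤ t, U i = X ^ i)
    (hUrec : ∀ n, t ≤ n → U (n + 1) = X * U n - U (n - t))
    (hTinit : ∀ i ≤ t, T i = X ^ i)
    (hTt1 : T (t + 1) = X ^ (t + 1) - ((t : Polynomial ℚ) + 1))
    (hTrec : ∀ n, t < n → T (n + 1) = X * T n - T (n - t)) :
    ∀ n, 1 ≤ n →
      T n = X * U (n - 1) -
        (if t + 1 ≤ n then ((t : Polynomial ℚ) + 1) * U (n - (t + 1)) else 0) := by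
  intro n
  induction n using Nat.strong_induction_on with
  | _ n ih =>
    intro hn
    rcases lt_trichotomy n (t + 1) with h | h | h
    · have hnt : n ≤ t := by omega
      rw [if_neg (by omega), hTinit n hnt, hUinit (n - 1) (by omega), sub_zero,
        ← pow_succ']
      congr 1; omega
    · subst h
      rw [if_pos le_rfl, hTt1, hUinit (t + 1 - 1) (by omega),
        show t + 1 - (t + 1) = 0 by omega, hUinit 0 (by omega),
        show t + 1 - 1 = t by omega, pow_zero, mul_one, ← pow_succ']
    · obtain ⟨m, rfl⟩ : ∃ m, n = m + 1 := ⟨n - 1, by omega⟩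
      have hm : t + 1 ≤ m := by omega
      have hTm := ih m (by omega) (by omega)
      have hTmt := ih (m - t) (by omega) (by omega)
      rw [if_pos hm] at hTm
      rw [hTrec m (by omega), hTm, hTmt, if_pos (show t + 1 ≤ m + 1 by omega)]
      have hUm : U m = X * U (m - 1) - U (m - t - 1) := by
        have := hUrec (m - 1) (by omega)
        rwa [show m - 1 + 1 = m by omega, show m - 1 - t = m - t - 1 by omega] at this
      have hUmt : U (m - t) = X * U (m - t - 1) -
          (if t + 1 ≤ m - t then U (m - t - 1 - t) else 0) := by
        by_cases hc : t + 1 ≤ m - t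
        · rw [if_pos hc]
          have := hUrec (m - t - 1) (by omega)
          rwa [show m - t - 1 + 1 = m - t by omega] at this
        · rw [if_neg hc, sub_zero, hUinit (m - t) (by omega),
            hUinit (m - t - 1) (by omega), ← pow_succ']
          congr 1; omega
      rw [Nat.add_sub_cancel, show m + 1 - (t + 1) = m - t by omega,
        show m - (t + 1) = m - t - 1 by omega,
        show m - t - (t + 1) = m - t - 1 - t by omega, hUm, hUmt]
      by_cases hc : t + 1 ≤ m - t <;> simp [hc] <;> ring
end

section
/- The ordinary generating function of the higher-order Chebyshev polynomials of the first kind is sum_{n>=0} T^{(t)}_n(x) z^n = (1 - t z^{t+1})/(1 - x z + z^{t+1}), as formal power series in z. -/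
open Polynomial PowerSeries

/-- The ordinary generating function `∑ T^{(t)}_n(x) zⁿ` equals
`(1 - t z^{t+1}) / (1 - xz + z^{t+1})`, stated as
`(1 - xz + z^{t+1}) · ∑ T^{(t)}_n(x) zⁿ = 1 - t z^{t+1}` over `ℚ[x][[z]]`. -/
theorem chebyshev1_higher_order_gf (t : ℕ) (ht : 1 ≤ t)
    (T : ℕ → Polynomial ℚ)
    (hTinit : ∀ i ≤ t, T i = Polynomial.X ^ i)
    (hTt1 : T (t + 1) = Polynomial.X ^ (t + 1) - ((t : Polynomial ℚ) + 1))
    (hTrec : ∀ n, t < n → T (n + 1) = Polynomial.X * T n - T (n - t)) :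
    (1 - PowerSeries.C (Polynomial.X : Polynomial ℚ) * PowerSeries.X
        + PowerSeries.X ^ (t + 1)) * PowerSeries.mk T
      = 1 - (t : PowerSeries (Polynomial ℚ)) * PowerSeries.X ^ (t + 1) := by
  have hnat : (t : PowerSeries (Polynomial ℚ)) = PowerSeries.C (t : Polynomial ℚ) := by
    simp
  ext n
  rw [add_mul, sub_mul, one_mul, mul_assoc, hnat]
  simp only [map_add, map_sub, PowerSeries.coeff_C_mul, PowerSeries.coeff_mk,
    PowerSeries.coeff_one, PowerSeries.coeff_X_pow_mul', PowerSeries.coeff_X_pow]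
  rcases n with _ | m
  · simp [hTinit 0 (by omega)]
  · rw [PowerSeries.coeff_succ_X_mul]
    simp only [PowerSeries.coeff_mk, Nat.succ_ne_zero, if_false]
    rcases lt_trichotomy (m + 1) (t + 1) with h | h | h
    · rw [if_neg (by omega), if_neg (by omega)]
      rw [hTinit (m+1) (by omega), hTinit m (by omega)]
      ring
    · have hm : m = t := by omega
      rw [if_pos (by omega), if_pos h, hm, hTt1, hTinit t le_rfl,
        hTinit ((t+1) - (t+1)) (by omega)]
      congr 1
      simp [Nat.sub_self]
      ring
    · rw [if_pos (by omega), if_neg (by omega)]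
      have := hTrec m (by omega)
      rw [show m + 1 - (t + 1) = m - t by omega, this]
      ring
end
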